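/- arXiv:2409.04862 — 5 statements merged into one kernel-verified Lean document; each statement's English description precedes it below -/
import Mathlib

section
/- Let N ≥ 1 be an integer, let c₁ < d₁ < c₂ < d₂ < ⋯ < c_N < d_N be real numbers, and let μ_j ∈ [c_j, d_j] for each j = 1,…,N. Then there exists exactly one function h, holomorphic on the open upper half-plane ℍ = {z ∈ ℂ : Im z > 0}, such that Im h(z) > 0 for all z ∈ ℍ and h(z)² = −4 · ∏_{j=1}^N (c_j − z)(d_j − z)/(μ_j − z)² for all z ∈ ℍ. -/
open Complex Finset

lemma re_div_abs_mono {z w : ℂ} (hz : 0 < z.im) (him : z.im = w.im) (hre : z.re ≤ w.re) :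
    z.re / ‖z‖ ≤ w.re / ‖w‖ := by
  have hz0 : z ≠ 0 := fun h => by simp [h] at hz
  have hw0 : w ≠ 0 := fun h => by rw [h] at him; simp at him; exact absurd him.symm hz.ne
  have ha : 0 < ‖z‖ := norm_pos_iff.mpr hz0
  have hb : 0 < ‖w‖ := norm_pos_iff.mpr hw0
  rw [div_le_div_iff₀ ha hb]
  have ha2 : ‖z‖^2 = z.re^2 + z.im^2 := by
    rw [Complex.sq_norm, Complex.normSq_apply]; ring
  have hb2 : ‖w‖^2 = w.re^2 + z.im^2 := by
    rw [Complex.sq_norm, Complex.normSq_apply, him]; ring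
  have h1 : z.re * w.re ≤ ‖z‖ * ‖w‖ := by
    calc z.re * w.re ≤ |z.re * w.re| := le_abs_self _
    _ = |z.re| * |w.re| := abs_mul _ _
    _ ≤ ‖z‖ * ‖w‖ :=
        mul_le_mul (Complex.abs_re_le_norm z) (Complex.abs_re_le_norm w) (abs_nonneg _) ha.le
  have expand : (w.re * ‖z‖ - z.re * ‖w‖) * (‖z‖ + ‖w‖)
      = (w.re - z.re) * (‖z‖ * ‖w‖ + z.im^2 - z.re * w.re) := by
    linear_combination w.re * ha2 - z.re * hb2
  have key : 0 ≤ (w.re * ‖z‖ - z.re * ‖w‖) * (‖z‖ + ‖w‖) := by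
    rw [expand]
    exact mul_nonneg (sub_nonneg.2 hre) (by nlinarith [sq_nonneg z.im])
  have h3 : (0:ℝ) ≤ w.re * ‖z‖ - z.re * ‖w‖ :=
    le_of_mul_le_mul_right (by linarith) (add_pos ha hb)
  linarith

lemma arg_antitone {z w : ℂ} (hz : 0 < z.im) (him : z.im = w.im) (hre : z.re ≤ w.re) :
    w.arg ≤ z.arg := by
  have hw : 0 < w.im := him ▸ hz
  rw [Complex.arg_of_im_pos hz, Complex.arg_of_im_pos hw]
  have mono := Real.monotone_arcsin (re_div_abs_mono hz him hre)
  simp only [Real.arccos]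
  linarith

lemma telescope (n : ℕ) (A B : ℕ → ℝ) (h2 : ∀ k, k + 1 < n → B k ≤ A (k + 1)) (hn : 1 ≤ n) :
    ∑ k ∈ Finset.range n, (B k - A k) ≤ B (n - 1) - A 0 := by
  induction n with
  | zero => omega
  | succ m ih =>
    rcases Nat.eq_or_lt_of_le hn with h | h
    · simp [← h]
    · have hm : 1 ≤ m := by omega
      rw [Finset.sum_range_succ]
      have := ih (fun k hk => h2 k (by omega)) hm
      have hBA : B (m - 1) ≤ A m := by
        have := h2 (m - 1) (by omega)
        rwa [Nat.sub_add_cancel hm] at this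
      simp only [Nat.add_sub_cancel]
      linarith

/-- `h` is holomorphic on the open upper half-plane `ℍ`, maps `ℍ` to `ℍ`, and satisfies
`h(z)² = −4 ∏ⱼ (cⱼ−z)(dⱼ−z)/(μⱼ−z)²` there. -/
def IsHerglotzSqrtDirac (N : ℕ) (c d μ : Fin N → ℝ) (h : ℂ → ℂ) : Prop :=
  DifferentiableOn ℂ h {z : ℂ | 0 < z.im} ∧
  (∀ z ∈ {z : ℂ | 0 < z.im}, 0 < (h z).im) ∧
  (∀ z ∈ {z : ℂ | 0 < z.im},
    (h z) ^ 2 = -4 * ∏ j, (((c j : ℂ) - z) * ((d j : ℂ) - z) / ((μ j : ℂ) - z) ^ 2))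

theorem stmt3 (N : ℕ) (hN : 1 ≤ N) (c d μ : Fin N → ℝ)
    (hcd : ∀ j, c j < d j) (hsep : ∀ i j : Fin N, i < j → d i < c j)
    (hμ : ∀ j, μ j ∈ Set.Icc (c j) (d j)) :
    ∃ h : ℂ → ℂ, IsHerglotzSqrtDirac N c d μ h ∧
      ∀ h' : ℂ → ℂ, IsHerglotzSqrtDirac N c d μ h' →
        Set.EqOn h' h {z : ℂ | 0 < z.im} := by
  set v : ℂ → Fin N → ℂ := fun z j =>
    Complex.log (z - (c j : ℂ)) + Complex.log (z - (d j : ℂ)) - 2 * Complex.log (z - (μ j : ℂ))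
    with hv
  set h : ℂ → ℂ := fun z => 2 * Complex.I * Complex.exp ((∑ j, v z j) / 2) with hh
  -- basic facts
  have him : ∀ z : ℂ, 0 < z.im → ∀ t : ℝ, (z - (t:ℂ)).im = z.im := by
    intro z hz t; simp
  have hne : ∀ z : ℂ, 0 < z.im → ∀ t : ℝ, z - (t:ℂ) ≠ 0 := by
    intro z hz t h0
    have := him z hz t
    rw [h0] at this; simp at this; exact hz.ne' this.symm
  have hslit : ∀ z : ℂ, 0 < z.im → ∀ t : ℝ, z - (t:ℂ) ∈ Complex.slitPlane := by
    intro z hz t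
    rw [Complex.mem_slitPlane_iff]
    right; rw [him z hz t]; exact hz.ne'
  -- arg monotone in shift
  have hargmono : ∀ z : ℂ, 0 < z.im → ∀ s t : ℝ, s ≤ t →
      Complex.arg (z - (s:ℂ)) ≤ Complex.arg (z - (t:ℂ)) := by
    intro z hz s t hst
    refine arg_antitone ?_ ?_ ?_
    · rw [him z hz t]; exact hz
    · rw [him z hz t, him z hz s]
    · simp only [Complex.sub_re, Complex.ofReal_re]; linarith
  -- imaginary part of v z j
  have hSim : ∀ z : ℂ, ((∑ j, v z j) / 2).im = (∑ j, (v z j).im) / 2 := by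
    intro z
    rw [Complex.div_im]
    simp [Complex.im_sum]
    ring
  have hvim : ∀ z : ℂ, ∀ j, (v z j).im =
      Complex.arg (z - (c j : ℂ)) + Complex.arg (z - (d j : ℂ))
        - 2 * Complex.arg (z - (μ j : ℂ)) := by
    intro z j
    simp [hv, Complex.sub_im, Complex.add_im, Complex.mul_im, Complex.log_im]
  -- bound on the sum of imaginary parts
  have hSbound : ∀ z : ℂ, 0 < z.im → |∑ j, (v z j).im| < Real.pi := by
    intro z hz
    have hargpos : ∀ t : ℝ, 0 < Complex.arg (z - (t:ℂ)) := by
      intro t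
      have h0 : 0 ≤ Complex.arg (z - (t:ℂ)) :=
        Complex.arg_nonneg_iff.2 (by rw [him z hz t]; exact hz.le)
      rcases h0.lt_or_eq with h | h
      · exact h
      · exfalso
        have := Complex.arg_eq_zero_iff.1 h.symm
        rw [him z hz t] at this
        exact hz.ne' this.2
    have harglt : ∀ t : ℝ, Complex.arg (z - (t:ℂ)) < Real.pi := by
      intro t
      exact Complex.arg_lt_pi_iff.2 (Or.inr (by rw [him z hz t]; exact hz.ne'))
    set A : ℕ → ℝ := fun k => if hk : k < N then Complex.arg (z - (c ⟨k, hk⟩ : ℂ)) else 0 with hA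
    set B : ℕ → ℝ := fun k => if hk : k < N then Complex.arg (z - (d ⟨k, hk⟩ : ℂ)) else 0 with hB
    have step1 : |∑ j, (v z j).im| ≤ ∑ j, |(v z j).im| := Finset.abs_sum_le_sum_abs _ _
    have step2 : ∑ j, |(v z j).im| ≤
        ∑ j, (Complex.arg (z - (d j : ℂ)) - Complex.arg (z - (c j : ℂ))) := by
      apply Finset.sum_le_sum
      intro j _
      rw [hvim z j, abs_le]
      have h1 := hargmono z hz (c j) (μ j) (hμ j).1
      have h2 := hargmono z hz (μ j) (d j) (hμ j).2
      constructor <;> linarith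
    have step3 : ∑ j, (Complex.arg (z - (d j : ℂ)) - Complex.arg (z - (c j : ℂ)))
        = ∑ k ∈ Finset.range N, (B k - A k) := by
      rw [← Fin.sum_univ_eq_sum_range (fun k => B k - A k) N]
      apply Finset.sum_congr rfl
      intro j _
      simp [hA, hB, j.isLt]
    have step4 : ∑ k ∈ Finset.range N, (B k - A k) ≤ B (N - 1) - A 0 := by
      apply telescope N A B _ hN
      intro k hk
      have hkN : k < N := by omega
      simp only [hA, hB, dif_pos hkN, dif_pos hk]
      exact hargmono z hz _ _ (hsep ⟨k, hkN⟩ ⟨k+1, hk⟩ (by simp [Fin.lt_def])).le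
    have hBlt : B (N - 1) < Real.pi := by
      have hN1 : N - 1 < N := by omega
      simp only [hB, dif_pos hN1]
      exact harglt _
    have hA0 : 0 < A 0 := by
      have h0N : 0 < N := hN
      simp only [hA, dif_pos h0N]
      exact hargpos _
    calc |∑ j, (v z j).im| ≤ ∑ k ∈ Finset.range N, (B k - A k) := by
          rw [← step3]; exact step1.trans step2
      _ ≤ B (N - 1) - A 0 := step4
      _ < Real.pi := by linarith
  -- positivity of imaginary part
  have hpos : ∀ z ∈ {z : ℂ | 0 < z.im}, 0 < (h z).im := by
    intro z hz
    simp only [Set.mem_setOf_eq] at hz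
    have hre : (h z).im = 2 * ((Complex.exp ((∑ j, v z j) / 2)).re) := by
      simp [hh, Complex.mul_im, Complex.mul_re, Complex.I_re, Complex.I_im]
    rw [hre, Complex.exp_re]
    have hb := hSbound z hz
    rw [abs_lt] at hb
    have hcos : 0 < Real.cos (((∑ j, v z j) / 2).im) := by
      apply Real.cos_pos_of_mem_Ioo
      rw [hSim z]
      constructor <;> [skip; skip] <;> · linarith [hb.1, hb.2]
    positivity
  -- the square identity
  have hsq : ∀ z ∈ {z : ℂ | 0 < z.im},
      (h z) ^ 2 = -4 * ∏ j, (((c j : ℂ) - z) * ((d j : ℂ) - z) / ((μ j : ℂ) - z) ^ 2) := by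
    intro z hz
    simp only [Set.mem_setOf_eq] at hz
    have e0 : Complex.exp ((∑ j, v z j) / 2) ^ 2 = Complex.exp (∑ j, v z j) := by
      rw [sq, ← Complex.exp_add]
      congr 1
      ring
    have e1 : h z ^ 2 = -4 * Complex.exp (∑ j, v z j) := by
      rw [hh]
      simp only
      rw [mul_pow, mul_pow, e0, Complex.I_sq]
      ring
    rw [e1, Complex.exp_sum]
    congr 1
    apply Finset.prod_congr rfl
    intro j _
    have hc := hne z hz (c j)
    have hd := hne z hz (d j)
    have hm := hne z hz (μ j)
    have e2 : Complex.exp (v z j)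
        = (z - (c j : ℂ)) * (z - (d j : ℂ)) / ((z - (μ j : ℂ)) * (z - (μ j : ℂ))) := by
      rw [hv]
      simp only
      rw [two_mul, Complex.exp_sub, Complex.exp_add, Complex.exp_add,
        Complex.exp_log hc, Complex.exp_log hd, Complex.exp_log hm]
    rw [e2, show ((μ j : ℂ) - z) ^ 2 = (z - (μ j : ℂ)) * (z - (μ j : ℂ)) by ring,
      show ((c j : ℂ) - z) * ((d j : ℂ) - z) = (z - (c j : ℂ)) * (z - (d j : ℂ)) by ring]
  -- differentiability
  have hdiff : DifferentiableOn ℂ h {z : ℂ | 0 < z.im} := by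
    intro z hz
    simp only [Set.mem_setOf_eq] at hz
    apply DifferentiableAt.differentiableWithinAt
    rw [hh]
    apply (differentiableAt_const _).mul
    apply DifferentiableAt.cexp
    apply DifferentiableAt.div_const
    apply DifferentiableAt.fun_sum
    intro j _
    simp only [hv]
    have l1 : DifferentiableAt ℂ (fun z : ℂ => Complex.log (z - (c j : ℂ))) z :=
      (differentiableAt_id.sub_const _).clog (hslit z hz (c j))
    have l2 : DifferentiableAt ℂ (fun z : ℂ => Complex.log (z - (d j : ℂ))) z :=
      (differentiableAt_id.sub_const _).clog (hslit z hz (d j))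
    have l3 : DifferentiableAt ℂ (fun z : ℂ => Complex.log (z - (μ j : ℂ))) z :=
      (differentiableAt_id.sub_const _).clog (hslit z hz (μ j))
    exact (l1.add l2).sub ((differentiableAt_const 2).mul l3)
  refine ⟨h, ⟨hdiff, hpos, hsq⟩, ?_⟩
  rintro h' ⟨_, hpos', hsq'⟩ z hz
  have e : h' z ^ 2 = h z ^ 2 := (hsq' z hz).trans (hsq z hz).symm
  have : (h' z - h z) * (h' z + h z) = 0 := by linear_combination e
  rcases mul_eq_zero.1 this with h0 | h0
  · exact sub_eq_zero.1 h0
  · exfalso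
    have hneg : h' z = -h z := eq_neg_of_add_eq_zero_left h0
    have := hpos' z hz
    rw [hneg] at this
    simp only [Complex.neg_im] at this
    linarith [hpos z hz]
end

section
/- Let N ≥ 1, let c₁ < d₁ < ⋯ < c_N < d_N be real numbers, let μ_j ∈ [c_j, d_j], and let h be the unique holomorphic function on ℍ = {z ∈ ℂ : Im z > 0} with Im h(z) > 0 and h(z)² = −4 · ∏_{j=1}^N (c_j − z)(d_j − z)/(μ_j − z)² on ℍ. Then for every real t not belonging to {c_j, d_j, μ_j : 1 ≤ j ≤ N}, the limit h(t) := lim_{y→0⁺} h(t + iy) exists; moreover, if t lies outside every interval [c_j, d_j], then h(t) is purely imaginary with Im h(t) > 0; if t ∈ (c_j, μ_j) for some j, then h(t) is real and positive; and if t ∈ (μ_j, d_j) for some j, then h(t) is real and negative. -/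
open Complex Filter Set

local notation "π" => Real.pi

section helpers

private lemma exp_arg_mul_I {w : ℂ} (hw : w ≠ 0) :
    Complex.exp (w.arg * I) = w / (‖w‖ : ℂ) := by
  rw [eq_div_iff (Complex.ofReal_ne_zero.mpr (norm_ne_zero_iff.mpr hw)), mul_comm]
  exact Complex.norm_mul_exp_arg_mul_I w

private lemma exp_arg_factor {u v p : ℂ} (hu : u ≠ 0) (hv : v ≠ 0) (hp : p ≠ 0) :
    Complex.exp (((u.arg + v.arg - 2 * p.arg : ℝ)) * I) =
      (u * v / p ^ 2) / ((‖u * v / p ^ 2‖ : ℝ) : ℂ) := by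
  have h1 : ((u.arg + v.arg - 2 * p.arg : ℝ) : ℂ) * I
      = u.arg * I + v.arg * I - (p.arg * I + p.arg * I) := by push_cast; ring
  rw [h1, Complex.exp_sub, Complex.exp_add, Complex.exp_add,
    exp_arg_mul_I hu, exp_arg_mul_I hv, exp_arg_mul_I hp]
  have h2 : ‖u * v / p ^ 2‖ = ‖u‖ * ‖v‖ / ‖p‖ ^ 2 := by
    rw [norm_div, norm_mul, norm_pow]
  rw [h2]
  have hau : (‖u‖ : ℂ) ≠ 0 := Complex.ofReal_ne_zero.mpr (norm_ne_zero_iff.mpr hu)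
  have hav : (‖v‖ : ℂ) ≠ 0 := Complex.ofReal_ne_zero.mpr (norm_ne_zero_iff.mpr hv)
  have hap : (‖p‖ : ℂ) ≠ 0 := Complex.ofReal_ne_zero.mpr (norm_ne_zero_iff.mpr hp)
  have hp2 : p ^ 2 ≠ 0 := pow_ne_zero 2 hp
  push_cast
  field_simp

private lemma const_of_multiples {g : ℝ → ℝ} (hc : ContinuousOn g (Ioi 0))
    (hg : ∀ y ∈ Ioi (0:ℝ), ∃ n : ℤ, g y = n * (2 * π)) :
    ∀ y₁ ∈ Ioi (0:ℝ), ∀ y₂ ∈ Ioi (0:ℝ), g y₁ = g y₂ := by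
  have key : ∀ y₁ ∈ Ioi (0:ℝ), ∀ y₂ ∈ Ioi (0:ℝ), y₁ ≤ y₂ → g y₁ = g y₂ := by
    intro y₁ hy₁ y₂ hy₂ hle
    by_contra hne
    have hIcc : Icc y₁ y₂ ⊆ Ioi 0 := fun x hx => lt_of_lt_of_le hy₁ hx.1
    have hconn := hc.mono hIcc
    obtain ⟨n₁, hn₁⟩ := hg y₁ hy₁
    obtain ⟨n₂, hn₂⟩ := hg y₂ hy₂
    have hπ := Real.pi_pos
    have hcontr : ∀ x ∈ Icc y₁ y₂, g x ≠ min (g y₁) (g y₂) + π := by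
      intro x hx hgx
      obtain ⟨n, hn⟩ := hg x (hIcc hx)
      rcases min_cases (g y₁) (g y₂) with ⟨hmin, _⟩ | ⟨hmin, _⟩ <;> rw [hmin] at hgx
      · rw [hn, hn₁] at hgx
        have he : ((2 * (n - n₁) - 1 : ℤ) : ℝ) * π = 0 := by push_cast; linarith
        have h2 : (2 * (n - n₁) - 1 : ℤ) = 0 := by
          by_contra h0
          exact (mul_ne_zero (Int.cast_ne_zero.mpr h0) hπ.ne') he
        omega
      · rw [hn, hn₂] at hgx
        have he : ((2 * (n - n₂) - 1 : ℤ) : ℝ) * π = 0 := by push_cast; linarith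
        have h2 : (2 * (n - n₂) - 1 : ℤ) = 0 := by
          by_contra h0
          exact (mul_ne_zero (Int.cast_ne_zero.mpr h0) hπ.ne') he
        omega
    have hgap : min (g y₁) (g y₂) + 2*π ≤ max (g y₁) (g y₂) := by
      rcases lt_or_gt_of_ne hne with hlt | hgt
      · have hk : n₁ + 1 ≤ n₂ := by
          by_contra hk
          push_neg at hk
          have h3 : (n₂ : ℝ) ≤ n₁ := by exact_mod_cast (by omega : n₂ ≤ n₁)
          have : g y₂ ≤ g y₁ := by rw [hn₁, hn₂]; nlinarith
          linarith
        have h1 : (n₁ : ℝ) * (2*π) + 2*π ≤ (n₂:ℝ) * (2*π) := by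
          have h3 : (n₁:ℝ) + 1 ≤ n₂ := by exact_mod_cast hk
          nlinarith
        rw [min_eq_left hlt.le, max_eq_right hlt.le, hn₁, hn₂]; linarith
      · have hk : n₂ + 1 ≤ n₁ := by
          by_contra hk
          push_neg at hk
          have h3 : (n₁ : ℝ) ≤ n₂ := by exact_mod_cast (by omega : n₁ ≤ n₂)
          have : g y₁ ≤ g y₂ := by rw [hn₁, hn₂]; nlinarith
          linarith
        have h1 : (n₂ : ℝ) * (2*π) + 2*π ≤ (n₁:ℝ) * (2*π) := by
          have h3 : (n₂:ℝ) + 1 ≤ n₁ := by exact_mod_cast hk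
          nlinarith
        rw [min_eq_right hgt.le, max_eq_left hgt.le, hn₁, hn₂]; linarith
    rcases le_total (g y₁) (g y₂) with hle2 | hle2
    · rw [min_eq_left hle2, max_eq_right hle2] at hgap
      have hv : min (g y₁) (g y₂) + π ∈ Icc (g y₁) (g y₂) := by
        rw [min_eq_left hle2]
        exact ⟨by linarith, by linarith⟩
      obtain ⟨x, hx, hgx⟩ := intermediate_value_Icc hle hconn hv
      exact hcontr x hx hgx
    · rw [min_eq_right hle2, max_eq_left hle2] at hgap
      have hv : min (g y₁) (g y₂) + π ∈ Icc (g y₂) (g y₁) := by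
        rw [min_eq_right hle2]
        exact ⟨by linarith, by linarith⟩
      obtain ⟨x, hx, hgx⟩ := intermediate_value_Icc' hle hconn hv
      exact hcontr x hx hgx
  intro y₁ hy₁ y₂ hy₂
  rcases le_total y₁ y₂ with hle | hle
  · exact key y₁ hy₁ y₂ hy₂ hle
  · exact (key y₂ hy₂ y₁ hy₁ hle).symm

end helpers

theorem stmt4 (N : ℕ) (hN : 1 ≤ N) (c d μ : Fin N → ℝ)
    (hcd : ∀ j, c j < d j) (hsep : ∀ i j : Fin N, i < j → d i < c j)
    (hμ : ∀ j, μ j ∈ Set.Icc (c j) (d j))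
    (h : ℂ → ℂ) (hh : IsHerglotzSqrtDirac N c d μ h)
    (t : ℝ) (ht : ∀ j, t ≠ c j ∧ t ≠ d j ∧ t ≠ μ j) :
    ∃ L : ℂ,
      Filter.Tendsto (fun y : ℝ => h ((t : ℂ) + (y : ℂ) * Complex.I))
        (nhdsWithin 0 (Set.Ioi 0)) (nhds L) ∧
      ((∀ j, t ∉ Set.Icc (c j) (d j)) → L.re = 0 ∧ 0 < L.im) ∧
      (∀ j, t ∈ Set.Ioo (c j) (μ j) → L.im = 0 ∧ 0 < L.re) ∧
      (∀ j, t ∈ Set.Ioo (μ j) (d j) → L.im = 0 ∧ L.re < 0) := by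
  obtain ⟨hdiff, himh, hsq⟩ := hh
  set F : ℂ → ℂ :=
    fun w => (-4 : ℂ) * ∏ j, (((c j : ℂ) - w) * ((d j : ℂ) - w) / ((μ j : ℂ) - w) ^ 2)
    with hFdef
  set zz : ℝ → ℂ := fun y => (t : ℂ) + (y : ℂ) * Complex.I with hzzdef
  have hzim : ∀ y : ℝ, (zz y).im = y := by intro y; simp [hzzdef]
  have hzmem : ∀ y : ℝ, 0 < y → zz y ∈ {z : ℂ | 0 < z.im} := by
    intro y hy; simp only [mem_setOf_eq, hzim]; exact hy
  have hfac : ∀ (a : ℝ) (w : ℂ), w.im ≠ 0 → ((a : ℂ) - w) ≠ 0 := by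
    intro a w hw h0
    apply hw
    have := congrArg Complex.im h0
    simpa using this
  set A : ℝ → ℝ := fun y => π + ∑ j, (Complex.arg ((c j : ℂ) - zz y)
      + Complex.arg ((d j : ℂ) - zz y) - 2 * Complex.arg ((μ j : ℂ) - zz y)) with hAdef
  have hexpA : ∀ y : ℝ, 0 < y →
      Complex.exp ((A y : ℝ) * I) = F (zz y) / ((‖F (zz y)‖ : ℝ) : ℂ) := by
    intro y hy
    have hne : ∀ a : ℝ, ((a : ℂ) - zz y) ≠ 0 := fun a => hfac a _ (by rw [hzim]; exact hy.ne')
    have hfne : ∀ j, ((c j : ℂ) - zz y) * ((d j : ℂ) - zz y) / ((μ j : ℂ) - zz y) ^ 2 ≠ 0 :=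
      fun j => div_ne_zero (mul_ne_zero (hne (c j)) (hne (d j))) (pow_ne_zero 2 (hne (μ j)))
    have habsne : ∀ j, ((‖((c j : ℂ) - zz y) * ((d j : ℂ) - zz y)
        / ((μ j : ℂ) - zz y) ^ 2‖ : ℝ) : ℂ) ≠ 0 :=
      fun j => Complex.ofReal_ne_zero.mpr (norm_ne_zero_iff.mpr (hfne j))
    have hsplit : Complex.exp ((A y : ℝ) * I)
        = Complex.exp ((π : ℝ) * I) * ∏ j, Complex.exp
            (((Complex.arg ((c j : ℂ) - zz y) + Complex.arg ((d j : ℂ) - zz y)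
              - 2 * Complex.arg ((μ j : ℂ) - zz y) : ℝ)) * I) := by
      rw [← Complex.exp_sum, ← Complex.exp_add]
      congr 1
      rw [hAdef]
      push_cast
      rw [add_mul, Finset.sum_mul]
    rw [hsplit, Complex.exp_pi_mul_I]
    rw [Finset.prod_congr rfl (fun j _ => exp_arg_factor (hne (c j)) (hne (d j)) (hne (μ j)))]
    have habsF : ((‖F (zz y)‖ : ℝ) : ℂ)
        = 4 * ∏ j, ((‖((c j : ℂ) - zz y) * ((d j : ℂ) - zz y)
            / ((μ j : ℂ) - zz y) ^ 2‖ : ℝ) : ℂ) := by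
      rw [hFdef]
      simp only [norm_mul, norm_prod]
      push_cast
      congr 1
      · simp
    rw [habsF, hFdef]
    rw [Finset.prod_div_distrib]
    have hPne : (∏ j, ((‖((c j : ℂ) - zz y) * ((d j : ℂ) - zz y)
        / ((μ j : ℂ) - zz y) ^ 2‖ : ℝ) : ℂ)) ≠ 0 := Finset.prod_ne_zero_iff.mpr fun j _ => habsne j
    field_simp
  have hFne : ∀ y : ℝ, 0 < y → F (zz y) ≠ 0 := by
    intro y hy
    have hne : ∀ a : ℝ, ((a : ℂ) - zz y) ≠ 0 := fun a => hfac a _ (by rw [hzim]; exact hy.ne')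
    rw [hFdef]
    exact mul_ne_zero (by norm_num) (Finset.prod_ne_zero_iff.mpr fun j _ =>
      div_ne_zero (mul_ne_zero (hne (c j)) (hne (d j))) (pow_ne_zero 2 (hne (μ j))))
  have hhne : ∀ y : ℝ, 0 < y → h (zz y) ≠ 0 := by
    intro y hy h0
    have := himh _ (hzmem y hy)
    rw [h0] at this
    simp at this
  have hexpB : ∀ y : ℝ, 0 < y →
      Complex.exp (((2 * Complex.arg (h (zz y)) : ℝ)) * I)
        = F (zz y) / ((‖F (zz y)‖ : ℝ) : ℂ) := by
    intro y hy
    have h1 : ((2 * Complex.arg (h (zz y)) : ℝ) : ℂ) * I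
        = Complex.arg (h (zz y)) * I + Complex.arg (h (zz y)) * I := by push_cast; ring
    rw [h1, Complex.exp_add, exp_arg_mul_I (hhne y hy), div_mul_div_comm]
    have h2 : h (zz y) * h (zz y) = F (zz y) := by rw [← sq]; exact hsq _ (hzmem y hy)
    have h3 : (‖h (zz y)‖ : ℂ) * (‖h (zz y)‖ : ℂ)
        = ((‖F (zz y)‖ : ℝ) : ℂ) := by
      rw [← Complex.ofReal_mul, ← norm_mul, h2]
    rw [h2, h3]
  set g : ℝ → ℝ := fun y => A y - 2 * Complex.arg (h (zz y)) with hgdef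
  have hgmult : ∀ y ∈ Ioi (0:ℝ), ∃ n : ℤ, g y = n * (2 * π) := by
    intro y hy
    rw [mem_Ioi] at hy
    have hdivne : F (zz y) / ((‖F (zz y)‖ : ℝ) : ℂ) ≠ 0 :=
      div_ne_zero (hFne y hy) (Complex.ofReal_ne_zero.mpr (norm_ne_zero_iff.mpr (hFne y hy)))
    have h1 : Complex.exp (((g y : ℝ)) * I) = 1 := by
      have he : ((g y : ℝ) : ℂ) * I = ((A y : ℝ) : ℂ) * I
          - ((2 * Complex.arg (h (zz y)) : ℝ) : ℂ) * I := by
        rw [hgdef]; push_cast; ring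
      rw [he, Complex.exp_sub, hexpA y hy, hexpB y hy, div_self hdivne]
    obtain ⟨n, hn⟩ := Complex.exp_eq_one_iff.mp h1
    refine ⟨n, ?_⟩
    have h2 : ((g y : ℝ) : ℂ) = ((n * (2 * π) : ℝ) : ℂ) := by
      have he : ((n : ℂ)) * (2 * (π : ℂ) * I) = ((n * (2 * π) : ℝ) : ℂ) * I := by push_cast; ring
      rw [he] at hn
      exact mul_right_cancel₀ Complex.I_ne_zero hn
    exact_mod_cast h2
  have hopen : IsOpen {z : ℂ | 0 < z.im} := isOpen_lt continuous_const Complex.continuous_im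
  have hzcont : Continuous zz := by
    rw [hzzdef]; exact continuous_const.add (Complex.continuous_ofReal.mul continuous_const)
  have hargCA : ∀ (a : ℝ), ∀ y : ℝ, 0 < y →
      ContinuousAt (fun y : ℝ => Complex.arg ((a : ℂ) - zz y)) y := by
    intro a y hy
    have hmem : ((a : ℂ) - zz y) ∈ Complex.slitPlane := by
      refine Or.inr ?_
      have : ((a : ℂ) - zz y).im = -y := by simp [hzim]
      rw [this]
      exact neg_ne_zero.mpr hy.ne'
    have hin : ContinuousAt (fun w : ℂ => (a : ℂ) - w) (zz y) :=
      (continuous_const.sub continuous_id).continuousAt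
    exact ((Complex.continuousAt_arg hmem).comp hin).comp hzcont.continuousAt
  have hgcont : ContinuousOn g (Ioi 0) := by
    intro y hy
    rw [mem_Ioi] at hy
    apply ContinuousAt.continuousWithinAt
    have hA : ContinuousAt A y := by
      rw [hAdef]
      apply ContinuousAt.add continuousAt_const
      exact tendsto_finset_sum _ fun j _ =>
        (((hargCA (c j) y hy).add (hargCA (d j) y hy)).sub
          ((hargCA (μ j) y hy).const_mul 2))
    have hhCA : ContinuousAt h (zz y) :=
      (hdiff.differentiableAt (hopen.mem_nhds (hzmem y hy))).continuousAt
    have hargh : ContinuousAt (fun y : ℝ => Complex.arg (h (zz y))) y :=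
      ((Complex.continuousAt_arg (Or.inr (himh _ (hzmem y hy)).ne')).comp hhCA).comp
        hzcont.continuousAt
    exact hA.sub (hargh.const_mul 2)
  have hargTop : ∀ a : ℝ, Tendsto (fun y : ℝ => Complex.arg ((a : ℂ) - zz y))
      atTop (nhds (-(π / 2))) := by
    intro a
    have h2 : Tendsto (fun y : ℝ => (((a - t) / y : ℝ) : ℂ) - I) atTop (nhds (-I)) := by
      have h3 : Tendsto (fun y : ℝ => (a - t) / y) atTop (nhds 0) :=
        Tendsto.div_atTop tendsto_const_nhds tendsto_id
      have h4 : Tendsto (fun y : ℝ => (((a - t) / y : ℝ) : ℂ)) atTop (nhds (((0:ℝ) : ℂ))) :=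
        (Complex.continuous_ofReal.tendsto _).comp h3
      have h5 := h4.sub (tendsto_const_nhds : Tendsto (fun _ : ℝ => I) atTop (nhds I))
      have h6 : ((0:ℝ):ℂ) - I = -I := by simp
      rw [h6] at h5
      exact h5
    have h5 := (Complex.continuousAt_arg (Or.inr (by simp : (-I).im ≠ 0))).tendsto.comp h2
    rw [Complex.arg_neg_I] at h5
    apply h5.congr'
    filter_upwards [eventually_gt_atTop 0] with y hy
    have he : (a : ℂ) - zz y = (y : ℝ) * ((((a - t) / y : ℝ) : ℂ) - I) := by
      have hyne : (y : ℂ) ≠ 0 := Complex.ofReal_ne_zero.mpr hy.ne'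
      rw [hzzdef]
      push_cast
      field_simp
      ring
    rw [Function.comp_apply, ← Complex.arg_real_mul ((((a - t) / y : ℝ) : ℂ) - I) hy, ← he]
  have hATop : Tendsto A atTop (nhds π) := by
    have hsum : Tendsto (fun y : ℝ => ∑ j, (Complex.arg ((c j : ℂ) - zz y)
        + Complex.arg ((d j : ℂ) - zz y) - 2 * Complex.arg ((μ j : ℂ) - zz y))) atTop
        (nhds (∑ _j : Fin N, (-(π / 2) + -(π / 2) - 2 * -(π / 2)))) :=
      tendsto_finset_sum _ fun j _ =>
        (((hargTop (c j)).add (hargTop (d j))).sub ((hargTop (μ j)).const_mul 2))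
    have hzero : (∑ _j : Fin N, (-(π / 2) + -(π / 2) - 2 * -(π / 2))) = 0 := by
      rw [Finset.sum_eq_zero]; intro j _; ring
    rw [hzero] at hsum
    have hfin := (tendsto_const_nhds : Tendsto (fun _ : ℝ => π) atTop (nhds π)).add hsum
    rw [add_zero] at hfin
    rw [hAdef]
    exact hfin
  obtain ⟨Y, hYpos, hYA⟩ : ∃ Y : ℝ, 0 < Y ∧ |A Y - π| < 1 := by
    have h1 := hATop.eventually (Metric.ball_mem_nhds π one_pos)
    obtain ⟨Y, h2, h3⟩ := ((eventually_gt_atTop 0).and h1).exists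
    exact ⟨Y, h2, by simpa [Real.dist_eq] using h3⟩
  have hargh_mem : ∀ y : ℝ, 0 < y →
      0 < Complex.arg (h (zz y)) ∧ Complex.arg (h (zz y)) < π := by
    intro y hy
    have him0 : 0 < (h (zz y)).im := himh _ (hzmem y hy)
    constructor
    · rcases lt_trichotomy (Complex.arg (h (zz y))) 0 with hlt | heq | hgt
      · exact absurd (Complex.arg_neg_iff.mp hlt) (by linarith)
      · exact absurd (Complex.arg_eq_zero_iff.mp heq).2 (by linarith)
      · exact hgt
    · exact Complex.arg_lt_pi_iff.mpr (Or.inr him0.ne')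
  have hgY : g Y = 0 := by
    obtain ⟨n, hn⟩ := hgmult Y (mem_Ioi.mpr hYpos)
    have hb := hargh_mem Y hYpos
    have hπ3 := Real.pi_gt_three
    have hYA' := abs_lt.mp hYA
    have hgval : g Y = A Y - 2 * Complex.arg (h (zz Y)) := by rw [hgdef]
    have habsg : |g Y| < 2 * π := by
      rw [abs_lt, hgval]
      constructor <;> nlinarith
    rw [hn] at habsg ⊢
    have h1 : |(n : ℝ)| * (2 * π) < 2 * π := by
      rwa [abs_mul, abs_of_pos (by linarith : (0:ℝ) < 2 * π)] at habsg
    have hn0 : n = 0 := by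
      by_contra h0
      have h2 : (1 : ℝ) ≤ |(n : ℝ)| := by
        rw [← Int.cast_abs]
        exact_mod_cast Int.one_le_abs h0
      nlinarith
    simp [hn0]
  have hgzero : ∀ y : ℝ, 0 < y → g y = 0 := fun y hy => by
    rw [const_of_multiples hgcont hgmult y (mem_Ioi.mpr hy) Y (mem_Ioi.mpr hYpos), hgY]
  have hargA : ∀ y : ℝ, 0 < y → Complex.arg (h (zz y)) = A y / 2 := by
    intro y hy
    have h1 := hgzero y hy
    rw [hgdef] at h1
    simp only at h1
    rw [eq_div_iff (by norm_num : (2:ℝ) ≠ 0)]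
    linarith
  -- boundary limits of the angles
  set l : ℝ → ℝ := fun a => if a < t then -π else 0 with hldef
  have hzt : Tendsto zz (nhdsWithin 0 (Ioi 0)) (nhds ((t : ℂ))) := by
    have h1 := (hzcont.tendsto (0:ℝ)).mono_left (nhdsWithin_le_nhds (s := Ioi (0:ℝ)))
    have h2 : zz 0 = (t : ℂ) := by rw [hzzdef]; simp
    rwa [h2] at h1
  have harg0 : ∀ a : ℝ, a ≠ t → Tendsto (fun y : ℝ => Complex.arg ((a : ℂ) - zz y))
      (nhdsWithin 0 (Ioi 0)) (nhds (l a)) := by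
    intro a ha
    have hcont : Tendsto (fun y : ℝ => (a : ℂ) - zz y) (nhdsWithin 0 (Ioi 0))
        (nhds (((a - t : ℝ) : ℂ))) := by
      have h1 := (tendsto_const_nhds : Tendsto (fun _ : ℝ => (a:ℂ)) (nhdsWithin 0 (Ioi 0))
        (nhds (a:ℂ))).sub hzt
      have h2 : (a : ℂ) - (t : ℂ) = ((a - t : ℝ) : ℂ) := by push_cast; ring
      rwa [h2] at h1
    rcases lt_or_gt_of_ne ha with hlt | hgt
    · have hre : (((a - t : ℝ) : ℂ)).re < 0 := by simp [sub_neg]; exact hlt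
      have him0 : (((a - t : ℝ) : ℂ)).im = 0 := by simp
      have hmain := Complex.tendsto_arg_nhdsWithin_im_neg_of_re_neg_of_im_zero hre him0
      have hl : l a = -π := if_pos hlt
      rw [hl]
      apply hmain.comp
      apply tendsto_nhdsWithin_of_tendsto_nhds_of_eventually_within _ hcont
      filter_upwards [self_mem_nhdsWithin] with y hy
      show ((a : ℂ) - zz y).im < 0
      have : ((a : ℂ) - zz y).im = -y := by simp [hzim]
      rw [this]
      exact neg_neg_of_pos hy
    · have hmem : (((a - t : ℝ) : ℂ)) ∈ Complex.slitPlane := by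
        refine Or.inl ?_
        simp only [Complex.ofReal_re]
        linarith
      have h1 := (Complex.continuousAt_arg hmem).tendsto.comp hcont
      have h2 : Complex.arg (((a - t : ℝ) : ℂ)) = 0 :=
        Complex.arg_ofReal_of_nonneg (by linarith)
      rw [h2] at h1
      have hl : l a = 0 := if_neg (not_lt.mpr hgt.le)
      rw [hl]
      exact h1
  set A0 : ℝ := π + ∑ j, (l (c j) + l (d j) - 2 * l (μ j)) with hA0def
  have hA0 : Tendsto A (nhdsWithin 0 (Ioi 0)) (nhds A0) := by
    have hsum : Tendsto (fun y : ℝ => ∑ j, (Complex.arg ((c j : ℂ) - zz y)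
        + Complex.arg ((d j : ℂ) - zz y) - 2 * Complex.arg ((μ j : ℂ) - zz y)))
        (nhdsWithin 0 (Ioi 0)) (nhds (∑ j, (l (c j) + l (d j) - 2 * l (μ j)))) :=
      tendsto_finset_sum _ fun j _ =>
        (((harg0 (c j) (ht j).1.symm).add (harg0 (d j) (ht j).2.1.symm)).sub
          ((harg0 (μ j) (ht j).2.2.symm).const_mul 2))
    rw [hAdef, hA0def]
    exact (tendsto_const_nhds : Tendsto (fun _ : ℝ => π) (nhdsWithin 0 (Ioi 0))
      (nhds π)).add hsum
  -- continuity of F at t and positivity of |F t|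
  have hμt : ∀ (a : ℝ), a ≠ t → ((a : ℂ) - (t : ℂ)) ≠ 0 := by
    intro a ha h0
    apply ha
    have h1 : (a : ℂ) = (t : ℂ) := by linear_combination h0
    exact_mod_cast h1
  have hFt : Tendsto (fun y : ℝ => F (zz y)) (nhdsWithin 0 (Ioi 0)) (nhds (F (t : ℂ))) := by
    have hFc : ContinuousAt F (t : ℂ) := by
      rw [hFdef]
      apply ContinuousAt.mul continuousAt_const
      apply tendsto_finset_prod
      intro j _
      exact ContinuousAt.div
        ((continuousAt_const.sub continuousAt_id).mul (continuousAt_const.sub continuousAt_id))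
        ((continuousAt_const.sub continuousAt_id).pow 2)
        (pow_ne_zero 2 (hμt (μ j) (ht j).2.2.symm))
    exact hFc.tendsto.comp hzt
  have hFtne : F (t : ℂ) ≠ 0 := by
    rw [hFdef]
    exact mul_ne_zero (by norm_num) (Finset.prod_ne_zero_iff.mpr fun j _ =>
      div_ne_zero (mul_ne_zero (hμt (c j) (ht j).1.symm) (hμt (d j) (ht j).2.1.symm))
        (pow_ne_zero 2 (hμt (μ j) (ht j).2.2.symm)))
  set r : ℝ := Real.sqrt (‖F (t : ℂ)‖) with hrdef
  have hrpos : 0 < r := Real.sqrt_pos.mpr (norm_pos_iff.mpr hFtne)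
  have habsh : ∀ y : ℝ, 0 < y →
      (‖h (zz y)‖) = Real.sqrt (‖F (zz y)‖) := by
    intro y hy
    have h1 : ‖F (zz y)‖ = ‖h (zz y)‖ ^ 2 := by
      rw [show F (zz y) = h (zz y) ^ 2 from (hsq _ (hzmem y hy)).symm, norm_pow]
    rw [h1, Real.sqrt_sq (norm_nonneg _)]
  have hrepr : ∀ y : ℝ, 0 < y → h (zz y)
      = ((Real.sqrt (‖F (zz y)‖) : ℝ) : ℂ)
        * Complex.exp (((A y / 2 : ℝ)) * I) := by
    intro y hy
    rw [← habsh y hy, ← hargA y hy]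
    exact (Complex.norm_mul_exp_arg_mul_I (h (zz y))).symm
  set L : ℂ := (r : ℂ) * Complex.exp (((A0 / 2 : ℝ)) * I) with hLdef
  have hL : Tendsto (fun y : ℝ => h (zz y)) (nhdsWithin 0 (Ioi 0)) (nhds L) := by
    have h1 : Tendsto (fun y : ℝ => ((Real.sqrt (‖F (zz y)‖) : ℝ) : ℂ))
        (nhdsWithin 0 (Ioi 0)) (nhds ((r : ℂ))) := by
      have := (Real.continuous_sqrt.tendsto _).comp ((continuous_norm.tendsto _).comp hFt)
      exact (Complex.continuous_ofReal.tendsto _).comp this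
    have h2 : Tendsto (fun y : ℝ => Complex.exp (((A y / 2 : ℝ)) * I))
        (nhdsWithin 0 (Ioi 0)) (nhds (Complex.exp (((A0 / 2 : ℝ)) * I))) := by
      apply (Complex.continuous_exp.tendsto _).comp
      have h3 : Tendsto (fun y : ℝ => (A y / 2 : ℝ)) (nhdsWithin 0 (Ioi 0)) (nhds (A0 / 2)) :=
        hA0.div_const 2
      have h4 := (Complex.continuous_ofReal.tendsto _).comp h3
      exact h4.mul_const I
    have h5 := h1.mul h2
    rw [hLdef]
    apply h5.congr'
    filter_upwards [self_mem_nhdsWithin] with y hy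
    exact (hrepr y hy).symm
  have hLre : L.re = r * Real.cos (A0 / 2) ∧ L.im = r * Real.sin (A0 / 2) := by
    rw [hLdef, Complex.exp_mul_I]
    constructor
    · simp only [Complex.mul_re, Complex.add_re, Complex.add_im, Complex.mul_im,
        Complex.ofReal_re, Complex.ofReal_im, Complex.I_re, Complex.I_im,
        Complex.cos_ofReal_re, Complex.sin_ofReal_im, Complex.cos_ofReal_im,
        Complex.sin_ofReal_re]
      ring
    · simp only [Complex.mul_re, Complex.add_re, Complex.add_im, Complex.mul_im,
        Complex.ofReal_re, Complex.ofReal_im, Complex.I_re, Complex.I_im,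
        Complex.cos_ofReal_re, Complex.sin_ofReal_im, Complex.cos_ofReal_im,
        Complex.sin_ofReal_re]
      ring
  have hlgt : ∀ a : ℝ, t < a → l a = 0 := by
    intro a ha; rw [hldef]; simp only; exact if_neg (not_lt.mpr ha.le)
  have hllt : ∀ a : ℝ, a < t → l a = -π := by
    intro a ha; rw [hldef]; simp only; exact if_pos ha
  refine ⟨L, hL, ?_, ?_, ?_⟩
  · intro hout
    have hterm : ∀ j : Fin N, l (c j) + l (d j) - 2 * l (μ j) = 0 := by
      intro j
      have hj := hout j
      rcases lt_or_ge t (c j) with h1 | h1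
      · have h2 : t < d j := h1.trans (hcd j)
        have h3 : t < μ j := lt_of_lt_of_le h1 (hμ j).1
        rw [hlgt _ h1, hlgt _ h2, hlgt _ h3]; ring
      · have hc : c j < t := lt_of_le_of_ne h1 (ht j).1.symm
        have hd : d j < t := by
          rcases le_or_gt t (d j) with h5 | h5
          · exact absurd ⟨h1, h5⟩ hj
          · exact h5
        have hm : μ j < t := lt_of_le_of_lt (hμ j).2 hd
        rw [hllt _ hc, hllt _ hd, hllt _ hm]; ring
    have hA0v : A0 = π := by
      rw [hA0def, Finset.sum_eq_zero (fun j _ => hterm j), add_zero]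
    constructor
    · rw [hLre.1, hA0v, Real.cos_pi_div_two, mul_zero]
    · rw [hLre.2, hA0v, Real.sin_pi_div_two, mul_one]; exact hrpos
  · intro j hj
    have hdj : t < d j := hj.2.trans_le (hμ j).2
    have hterm : ∀ k : Fin N, k ≠ j → l (c k) + l (d k) - 2 * l (μ k) = 0 := by
      intro k hk
      rcases hk.lt_or_gt with hlt | hlt
      · have h1 : d k < t := (hsep k j hlt).trans hj.1
        have h2 : c k < t := (hcd k).trans h1
        have h3 : μ k < t := lt_of_le_of_lt (hμ k).2 h1
        rw [hllt _ h2, hllt _ h1, hllt _ h3]; ring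
      · have h1 : t < c k := hdj.trans (hsep j k hlt)
        have h2 : t < d k := h1.trans (hcd k)
        have h3 : t < μ k := h1.trans_le (hμ k).1
        rw [hlgt _ h1, hlgt _ h2, hlgt _ h3]; ring
    have hsum : ∑ k, (l (c k) + l (d k) - 2 * l (μ k)) = -π := by
      rw [Finset.sum_eq_single_of_mem j (Finset.mem_univ j) (fun k _ hk => hterm k hk)]
      rw [hllt _ hj.1, hlgt _ hdj, hlgt _ hj.2]; ring
    have hA0v : A0 = 0 := by rw [hA0def, hsum]; ring
    constructor
    · rw [hLre.2, hA0v]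
      norm_num
    · rw [hLre.1, hA0v]
      norm_num
      exact hrpos
  · intro j hj
    have hcj : c j < t := lt_of_le_of_lt (hμ j).1 hj.1
    have hterm : ∀ k : Fin N, k ≠ j → l (c k) + l (d k) - 2 * l (μ k) = 0 := by
      intro k hk
      rcases hk.lt_or_gt with hlt | hlt
      · have h1 : d k < t := (hsep k j hlt).trans hcj
        have h2 : c k < t := (hcd k).trans h1
        have h3 : μ k < t := lt_of_le_of_lt (hμ k).2 h1
        rw [hllt _ h2, hllt _ h1, hllt _ h3]; ring
      · have h1 : t < c k := hj.2.trans (hsep j k hlt)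
        have h2 : t < d k := h1.trans (hcd k)
        have h3 : t < μ k := h1.trans_le (hμ k).1
        rw [hlgt _ h1, hlgt _ h2, hlgt _ h3]; ring
    have hsum : ∑ k, (l (c k) + l (d k) - 2 * l (μ k)) = π := by
      rw [Finset.sum_eq_single_of_mem j (Finset.mem_univ j) (fun k _ hk => hterm k hk)]
      rw [hllt _ hcj, hlgt _ hj.2, hllt _ hj.1]; ring
    have hA0v : A0 = 2 * π := by rw [hA0def, hsum]; ring
    have hhalf : (2 * π) / 2 = π := by ring
    constructor
    · rw [hLre.2, hA0v, hhalf, Real.sin_pi, mul_zero]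
    · rw [hLre.1, hA0v, hhalf, Real.cos_pi]
      linarith
end

section
/- Let N ≥ 0 be an integer, let d₀ < c₁ < d₁ < ⋯ < c_N < d_N be real numbers, let μ₀ be a real number with μ₀ ≤ d₀, and let μ_j ∈ [c_j, d_j] for j = 1,…,N. Then there exists exactly one function h, holomorphic on ℍ = {z ∈ ℂ : Im z > 0}, such that Im h(z) > 0 for all z ∈ ℍ and h(z)² = (1 + d₀ − μ₀)² · (d₀ − z) · ∏_{j=1}^N (c_j − z)(d_j − z) / ((μ₀ − z)² · ∏_{j=1}^N (μ_j − z)²) for all z ∈ ℍ. -/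
/-- `h` is holomorphic on the open upper half-plane `ℍ`, maps `ℍ` to `ℍ`, and satisfies
`h(z)² = (1+d₀−μ₀)²·(d₀−z)·∏ⱼ(cⱼ−z)(dⱼ−z)/((μ₀−z)²·∏ⱼ(μⱼ−z)²)` there. -/
def IsHerglotzSqrtSchrodinger (N : ℕ) (d0 μ0 : ℝ) (c d μ : Fin N → ℝ) (h : ℂ → ℂ) : Prop :=
  DifferentiableOn ℂ h {z : ℂ | 0 < z.im} ∧
  (∀ z ∈ {z : ℂ | 0 < z.im}, 0 < (h z).im) ∧
  (∀ z ∈ {z : ℂ | 0 < z.im},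
    (h z) ^ 2 = ((1 + d0 - μ0 : ℝ) : ℂ) ^ 2 * ((d0 : ℂ) - z) *
        (∏ j, ((c j : ℂ) - z) * ((d j : ℂ) - z)) /
      (((μ0 : ℂ) - z) ^ 2 * ∏ j, ((μ j : ℂ) - z) ^ 2))

private lemma div_sqrt_mono {y u v : ℝ} (hy : y ≠ 0) (huv : u ≤ v) :
    u / Real.sqrt (u ^ 2 + y ^ 2) ≤ v / Real.sqrt (v ^ 2 + y ^ 2) := by
  have hy2 : 0 < y ^ 2 := by positivity
  have ha : 0 < Real.sqrt (u ^ 2 + y ^ 2) := Real.sqrt_pos.2 (by positivity)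
  have hb : 0 < Real.sqrt (v ^ 2 + y ^ 2) := Real.sqrt_pos.2 (by positivity)
  have ha2 : Real.sqrt (u ^ 2 + y ^ 2) ^ 2 = u ^ 2 + y ^ 2 := Real.sq_sqrt (by positivity)
  have hb2 : Real.sqrt (v ^ 2 + y ^ 2) ^ 2 = v ^ 2 + y ^ 2 := Real.sq_sqrt (by positivity)
  rw [div_le_div_iff₀ ha hb]
  set a := Real.sqrt (u ^ 2 + y ^ 2)
  set b := Real.sqrt (v ^ 2 + y ^ 2)
  rcases le_or_gt u 0 with hu | hu
  · rcases le_or_gt 0 v with hv | hv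
    · have h1 : u * b ≤ 0 := mul_nonpos_of_nonpos_of_nonneg hu hb.le
      have h2 : 0 ≤ v * a := mul_nonneg hv ha.le
      linarith
    · -- u ≤ v < 0
      have h1 : 0 ≤ -v * a := mul_nonneg (by linarith) ha.le
      have h1' : 0 ≤ -u * b := mul_nonneg (by linarith) hb.le
      have hv2 : v ^ 2 ≤ u ^ 2 := by
        nlinarith [mul_nonneg (by linarith : (0:ℝ) ≤ v - u) (by linarith : (0:ℝ) ≤ -v - u)]
      have hsq : (-v * a) ^ 2 ≤ (-u * b) ^ 2 := by
        have step1 : (-v * a) ^ 2 = v ^ 2 * (u ^ 2 + y ^ 2) := by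
          rw [show (-v * a) ^ 2 = v ^ 2 * a ^ 2 from by ring, ha2]
        have step2 : (-u * b) ^ 2 = u ^ 2 * (v ^ 2 + y ^ 2) := by
          rw [show (-u * b) ^ 2 = u ^ 2 * b ^ 2 from by ring, hb2]
        rw [step1, step2]
        nlinarith [mul_le_mul_of_nonneg_right hv2 (sq_nonneg y)]
      have e1 : -v * a = Real.sqrt ((-v * a) ^ 2) := (Real.sqrt_sq h1).symm
      have e2 : Real.sqrt ((-v * a) ^ 2) ≤ Real.sqrt ((-u * b) ^ 2) :=
        Real.sqrt_le_sqrt hsq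
      have e3 : Real.sqrt ((-u * b) ^ 2) = -u * b := Real.sqrt_sq h1'
      linarith
  · -- 0 < u ≤ v
    have h1 : 0 ≤ u * b := mul_nonneg hu.le hb.le
    have h1' : 0 ≤ v * a := mul_nonneg (by linarith) ha.le
    have hu2 : u ^ 2 ≤ v ^ 2 := by
      nlinarith [mul_nonneg (by linarith : (0:ℝ) ≤ v - u) (by linarith : (0:ℝ) ≤ v + u)]
    have hsq : (u * b) ^ 2 ≤ (v * a) ^ 2 := by
      have step1 : (u * b) ^ 2 = u ^ 2 * (v ^ 2 + y ^ 2) := by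
        rw [show (u * b) ^ 2 = u ^ 2 * b ^ 2 from by ring, hb2]
      have step2 : (v * a) ^ 2 = v ^ 2 * (u ^ 2 + y ^ 2) := by
        rw [show (v * a) ^ 2 = v ^ 2 * a ^ 2 from by ring, ha2]
      rw [step1, step2]
      nlinarith [mul_le_mul_of_nonneg_right hu2 (sq_nonneg y)]
    have e1 : u * b = Real.sqrt ((u * b) ^ 2) := (Real.sqrt_sq h1).symm
    have e2 : Real.sqrt ((u * b) ^ 2) ≤ Real.sqrt ((v * a) ^ 2) :=
      Real.sqrt_le_sqrt hsq
    have e3 : Real.sqrt ((v * a) ^ 2) = v * a := Real.sqrt_sq h1'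
    linarith

private lemma arg_sub_lt_zero {z : ℂ} (hz : 0 < z.im) (t : ℝ) : ((t : ℂ) - z).arg < 0 :=
  Complex.arg_neg_iff.2 (by simp [hz])

private lemma arg_sub_ne_zero {z : ℂ} (hz : 0 < z.im) (t : ℝ) : ((t : ℂ) - z) ≠ 0 := by
  intro h
  have : ((t : ℂ) - z).im = 0 := by rw [h]; simp
  simp at this
  linarith

private lemma arg_sub_mono {z : ℂ} (hz : 0 < z.im) {t s : ℝ} (hts : t ≤ s) :
    ((t : ℂ) - z).arg ≤ ((s : ℂ) - z).arg := by
  have habs : ∀ r : ℝ, ‖((r : ℂ) - z)‖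
      = Real.sqrt ((r - z.re) ^ 2 + z.im ^ 2) := by
    intro r
    rw [Complex.norm_def, Complex.normSq_apply]
    congr 1
    simp
    ring
  have hcos : Real.cos (((t : ℂ) - z).arg) ≤ Real.cos (((s : ℂ) - z).arg) := by
    rw [Complex.cos_arg (arg_sub_ne_zero hz t), Complex.cos_arg (arg_sub_ne_zero hz s),
      habs, habs]
    have hre : ∀ r : ℝ, ((r : ℂ) - z).re = r - z.re := by intro r; simp
    rw [hre, hre]
    exact div_sqrt_mono (ne_of_gt hz) (by linarith)
  by_contra hlt
  push_neg at hlt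
  have h1 := arg_sub_lt_zero hz t
  have h2 := arg_sub_lt_zero hz s
  have h3 := Complex.neg_pi_lt_arg ((t : ℂ) - z)
  have h4 := Complex.neg_pi_lt_arg ((s : ℂ) - z)
  have := Real.strictAntiOn_cos
    (show -((t : ℂ) - z).arg ∈ Set.Icc 0 Real.pi from Set.mem_Icc.mpr ⟨by linarith, by linarith⟩)
    (show -((s : ℂ) - z).arg ∈ Set.Icc 0 Real.pi from Set.mem_Icc.mpr ⟨by linarith, by linarith⟩)
    (by linarith)
  rw [Real.cos_neg, Real.cos_neg] at this
  linarith

private lemma chain_sum (θ : ℝ → ℝ) (hm : ∀ t s : ℝ, t ≤ s → θ t ≤ θ s) :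
    ∀ (N : ℕ) (d0 : ℝ) (c d : Fin N → ℝ), (∀ j, d0 < c j) → (∀ j, c j < d j) →
    (∀ i j : Fin N, i < j → d i < c j) → ∀ b : ℝ, d0 ≤ b → (∀ j, d j ≤ b) →
    ∑ j, (θ (d j) - θ (c j)) ≤ θ b - θ d0 := by
  intro N
  induction N with
  | zero =>
    intro d0 c d _ _ _ b hb _
    simp only [Finset.univ_eq_empty, Finset.sum_empty]
    have := hm d0 b hb
    linarith
  | succ n ih =>
    intro d0 c d h1 h2 h3 b hb hjb
    rw [Fin.sum_univ_castSucc]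
    have hpre := ih d0 (fun j => c j.castSucc) (fun j => d j.castSucc)
      (fun j => h1 _) (fun j => h2 _)
      (fun i j hij => h3 _ _ (by simpa using hij))
      (c (Fin.last n)) (le_of_lt (h1 _))
      (fun j => le_of_lt (h3 _ _ (Fin.castSucc_lt_last j)))
    have hlast := hm (d (Fin.last n)) b (hjb _)
    linarith

theorem stmt6 (N : ℕ) (d0 μ0 : ℝ) (c d μ : Fin N → ℝ)
    (hμ0 : μ0 ≤ d0) (hd0 : ∀ j, d0 < c j)
    (hcd : ∀ j, c j < d j) (hsep : ∀ i j : Fin N, i < j → d i < c j)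
    (hμ : ∀ j, μ j ∈ Set.Icc (c j) (d j)) :
    ∃ h : ℂ → ℂ, IsHerglotzSqrtSchrodinger N d0 μ0 c d μ h ∧
      ∀ h' : ℂ → ℂ, IsHerglotzSqrtSchrodinger N d0 μ0 c d μ h' →
        Set.EqOn h' h {z : ℂ | 0 < z.im} := by
  classical
  have half : (1 / 2 : ℂ) = ((1 / 2 : ℝ) : ℂ) := by norm_num
  set L : ℝ → ℂ → ℂ := fun t z => Complex.log ((t : ℂ) - z) with hLdef
  set S : ℂ → ℂ := fun z => (1 / 2 : ℂ) * L d0 z - L μ0 z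
      + ∑ j, ((1 / 2 : ℂ) * (L (c j) z + L (d j) z) - L (μ j) z) with hSdef
  set h : ℂ → ℂ := fun z => ((1 + d0 - μ0 : ℝ) : ℂ) * Complex.exp (S z) with hhdef
  have hmain : IsHerglotzSqrtSchrodinger N d0 μ0 c d μ h := by
    refine ⟨?_, ?_, ?_⟩
    · -- differentiability
      intro z hz
      have hz' : 0 < z.im := hz
      have hd : ∀ t : ℝ, DifferentiableAt ℂ (L t) z := by
        intro t
        have h1 : DifferentiableAt ℂ (fun w : ℂ => (t : ℂ) - w) z :=
          (differentiableAt_const _).sub differentiableAt_id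
        exact (Complex.differentiableAt_log (by
          rw [Complex.mem_slitPlane_iff]
          right
          simp
          linarith)).comp z h1
      have hdS : DifferentiableAt ℂ S z := by
        apply DifferentiableAt.add
        · exact ((hd d0).const_mul _).sub (hd μ0)
        · apply DifferentiableAt.fun_sum
          intro j _
          exact (((hd (c j)).add (hd (d j))).const_mul _).sub (hd (μ j))
      exact ((hdS.cexp).const_mul _).differentiableWithinAt
    · -- positivity of the imaginary part
      intro z hz
      have hz' : 0 < z.im := hz
      set θ : ℝ → ℝ := fun t => ((t : ℂ) - z).arg with hθdef
      have hmono : ∀ t s : ℝ, t ≤ s → θ t ≤ θ s := fun t s hts => arg_sub_mono hz' hts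
      have hneg : ∀ t : ℝ, θ t < 0 := fun t => arg_sub_lt_zero hz' t
      have hgtpi : ∀ t : ℝ, -Real.pi < θ t := fun t => Complex.neg_pi_lt_arg _
      -- imaginary part of S
      have himS : (S z).im = (1 / 2 : ℝ) * θ d0 - θ μ0
          + ∑ j, ((1 / 2 : ℝ) * (θ (c j) + θ (d j)) - θ (μ j)) := by
        simp only [hSdef, hLdef, Complex.add_im, Complex.sub_im, half,
          Complex.im_ofReal_mul, Complex.im_sum, Complex.log_im, Complex.add_im]
        rfl
      -- bound for the chain sum
      obtain ⟨b0, hb0⟩ := (Set.finite_range d).bddAbove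
      set b : ℝ := max d0 b0 with hbdef
      have hK : ∑ j, (θ (d j) - θ (c j)) ≤ θ b - θ d0 :=
        chain_sum θ hmono N d0 c d hd0 hcd hsep b (le_max_left _ _)
          (fun j => le_trans (hb0 (Set.mem_range_self j)) (le_max_right _ _))
      have hKlt : ∑ j, (θ (d j) - θ (c j)) < -θ d0 := by
        have := hneg b
        linarith
      -- termwise bounds
      have hup : ∑ j, ((1 / 2 : ℝ) * (θ (c j) + θ (d j)) - θ (μ j))
          ≤ ∑ j, (1 / 2 : ℝ) * (θ (d j) - θ (c j)) := by
        apply Finset.sum_le_sum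
        intro j _
        have := hmono (c j) (μ j) (hμ j).1
        linarith
      have hlo : ∑ j, (1 / 2 : ℝ) * (θ (c j) - θ (d j))
          ≤ ∑ j, ((1 / 2 : ℝ) * (θ (c j) + θ (d j)) - θ (μ j)) := by
        apply Finset.sum_le_sum
        intro j _
        have := hmono (μ j) (d j) (hμ j).2
        linarith
      have hsum1 : ∑ j, (1 / 2 : ℝ) * (θ (d j) - θ (c j))
          = (1 / 2 : ℝ) * ∑ j, (θ (d j) - θ (c j)) := by
        rw [Finset.mul_sum]
      have hsum2 : ∑ j, (1 / 2 : ℝ) * (θ (c j) - θ (d j))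
          + ∑ j, (1 / 2 : ℝ) * (θ (d j) - θ (c j)) = 0 := by
        rw [← Finset.sum_add_distrib]
        exact Finset.sum_eq_zero fun j _ => by ring
      have hμ0m := hmono μ0 d0 hμ0
      have hApos : 0 < (S z).im := by
        rw [himS]
        linarith [hlo, hsum1, hsum2, hKlt, hμ0m]
      have hAlt : (S z).im < Real.pi := by
        rw [himS]
        linarith [hup, hsum1, hKlt, hgtpi μ0, hneg d0]
      have hCpos : (0 : ℝ) < 1 + d0 - μ0 := by linarith
      have : (h z).im = (1 + d0 - μ0) * ((Complex.exp (S z)).im) := by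
        simp only [hhdef, Complex.im_ofReal_mul]
      rw [this, Complex.exp_im]
      have hsin : 0 < Real.sin (S z).im := Real.sin_pos_of_pos_of_lt_pi hApos hAlt
      positivity
    · -- the square identity
      intro z hz
      have hz' : 0 < z.im := hz
      have hwne : ∀ t : ℝ, ((t : ℂ) - z) ≠ 0 := fun t => arg_sub_ne_zero hz' t
      have eL : ∀ t : ℝ, Complex.exp (L t z) = (t : ℂ) - z := fun t =>
        Complex.exp_log (hwne t)
      have hsplit : ∑ j, ((1 / 2 : ℂ) * (L (c j) z + L (d j) z) - L (μ j) z)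
          = (1 / 2 : ℂ) * (∑ j, L (c j) z) + (1 / 2 : ℂ) * (∑ j, L (d j) z)
            - ∑ j, L (μ j) z := by
        rw [Finset.mul_sum, Finset.mul_sum, ← Finset.sum_add_distrib,
          ← Finset.sum_sub_distrib]
        exact Finset.sum_congr rfl fun j _ => by ring
      have key : Complex.exp (S z) ^ 2
            * (Complex.exp (L μ0 z) ^ 2 * Complex.exp (∑ j, L (μ j) z) ^ 2)
          = Complex.exp (L d0 z) * Complex.exp (∑ j, L (c j) z)
            * Complex.exp (∑ j, L (d j) z) := by
        simp only [sq, ← Complex.exp_add]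
        congr 1
        simp only [hSdef]
        rw [hsplit]
        ring
      have eA1 : Complex.exp (∑ j, L (c j) z) = ∏ j, ((c j : ℂ) - z) := by
        rw [Complex.exp_sum]
        exact Finset.prod_congr rfl fun j _ => eL (c j)
      have eA2 : Complex.exp (∑ j, L (d j) z) = ∏ j, ((d j : ℂ) - z) := by
        rw [Complex.exp_sum]
        exact Finset.prod_congr rfl fun j _ => eL (d j)
      have eB1 : Complex.exp (∑ j, L (μ j) z) = ∏ j, ((μ j : ℂ) - z) := by
        rw [Complex.exp_sum]
        exact Finset.prod_congr rfl fun j _ => eL (μ j)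
      rw [eL d0, eL μ0, eA1, eA2, eB1] at key
      have hden : (((μ0 : ℂ) - z) ^ 2 * ∏ j, ((μ j : ℂ) - z) ^ 2) ≠ 0 := by
        apply mul_ne_zero (pow_ne_zero _ (hwne μ0))
        rw [Finset.prod_ne_zero_iff]
        exact fun j _ => pow_ne_zero _ (hwne (μ j))
      have hprodsq : ∏ j, ((μ j : ℂ) - z) ^ 2 = (∏ j, ((μ j : ℂ) - z)) ^ 2 :=
        Finset.prod_pow _ _ _
      have hproddistrib : ∏ j, (((c j : ℂ) - z) * ((d j : ℂ) - z))
          = (∏ j, ((c j : ℂ) - z)) * ∏ j, ((d j : ℂ) - z) :=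
        Finset.prod_mul_distrib
      rw [hhdef]
      rw [eq_div_iff hden]
      rw [hprodsq, hproddistrib]
      rw [mul_pow]
      linear_combination ((1 + d0 - μ0 : ℝ) : ℂ) ^ 2 * key
  refine ⟨h, hmain, ?_⟩
  intro h' hh' z hz
  have e1 := hmain.2.2 z hz
  have e2 := hh'.2.2 z hz
  have hfac : (h' z - h z) * (h' z + h z) = 0 := by
    have : h' z ^ 2 = h z ^ 2 := by rw [e1, e2]
    linear_combination this
  rcases mul_eq_zero.1 hfac with h1 | h2
  · exact sub_eq_zero.1 h1
  · exfalso
    have him1 := hmain.2.1 z hz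
    have him2 := hh'.2.1 z hz
    have : h' z = -h z := by linear_combination h2
    rw [this] at him2
    simp at him2
    linarith
end

section
/- Let N ≥ 0 be an integer, let d₀ < c₁ < d₁ < ⋯ < c_N < d_N < c_{N+1} be real numbers, let μ₋, μ₊ be real numbers with μ₋ ≤ d₀ and μ₊ ≥ c_{N+1}, and let μ_j ∈ [c_j, d_j] for j = 1,…,N. Then there exists exactly one function h, holomorphic on ℍ = {z ∈ ℂ : Im z > 0}, such that Im h(z) > 0 for all z ∈ ℍ and h(z)² = (1 + d₀ − μ₋)² · (1 + μ₊ − c_{N+1})² · (z − d₀)(z − c_{N+1}) · ∏_{j=1}^N (c_j − z)(d_j − z) / ((μ₋ − z)²(μ₊ − z)² · ∏_{j=1}^N (μ_j − z)²) for all z ∈ ℍ. -/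
open Complex Finset

section HerglotzAux

lemma tele_sum (n : ℕ) (f g : ℕ → ℝ) (h : ∀ i, i < n → f i ≤ g (i + 1)) :
    ∑ i ∈ Finset.range n, (f i - g i) ≤ g n - g 0 :=
  calc ∑ i ∈ Finset.range n, (f i - g i)
      ≤ ∑ i ∈ Finset.range n, (g (i + 1) - g i) :=
        Finset.sum_le_sum fun i hi => sub_le_sub_right (h i (Finset.mem_range.mp hi)) _
    _ = g n - g 0 := Finset.sum_range_sub g n

lemma arg_pos_aux {z : ℂ} (hz : 0 < z.im) (a : ℝ) : 0 < (z - (a : ℂ)).arg := by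
  have him : (z - (a : ℂ)).im = z.im := by simp
  refine lt_of_le_of_ne (Complex.arg_nonneg_iff.mpr (by rw [him]; exact hz.le)) ?_
  intro h
  have := (Complex.arg_eq_zero_iff.mp h.symm).2
  rw [him] at this; exact hz.ne' this

lemma arg_lt_pi_aux {z : ℂ} (hz : 0 < z.im) (a : ℝ) : (z - (a : ℂ)).arg < Real.pi := by
  have him : (z - (a : ℂ)).im = z.im := by simp
  refine lt_of_le_of_ne (Complex.arg_le_pi _) ?_
  intro h
  have := (Complex.arg_eq_pi_iff.mp h).2
  rw [him] at this; exact hz.ne' this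

lemma quot_mono {y s t : ℝ} (hy : 0 < y) (hst : s ≤ t) :
    s / Real.sqrt (s ^ 2 + y ^ 2) ≤ t / Real.sqrt (t ^ 2 + y ^ 2) := by
  have hs : (0:ℝ) < Real.sqrt (s ^ 2 + y ^ 2) := Real.sqrt_pos.mpr (by positivity)
  have ht : (0:ℝ) < Real.sqrt (t ^ 2 + y ^ 2) := Real.sqrt_pos.mpr (by positivity)
  have hs2 : Real.sqrt (s ^ 2 + y ^ 2) ^ 2 = s ^ 2 + y ^ 2 := Real.sq_sqrt (by positivity)
  have ht2 : Real.sqrt (t ^ 2 + y ^ 2) ^ 2 = t ^ 2 + y ^ 2 := Real.sq_sqrt (by positivity)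
  rw [div_le_div_iff₀ hs ht]
  rcases le_or_gt 0 s with h0 | h0
  · have h0t : (0:ℝ) ≤ t := le_trans h0 hst
    have key : (s * Real.sqrt (t ^ 2 + y ^ 2)) ^ 2 ≤ (t * Real.sqrt (s ^ 2 + y ^ 2)) ^ 2 := by
      rw [mul_pow, mul_pow, hs2, ht2]
      nlinarith [mul_self_le_mul_self h0 hst, sq_nonneg y]
    have := Real.sqrt_le_sqrt key
    rwa [Real.sqrt_sq (by positivity), Real.sqrt_sq (by positivity)] at this
  · rcases le_or_gt 0 t with h1 | h1
    · have : s * Real.sqrt (t ^ 2 + y ^ 2) ≤ 0 := mul_nonpos_of_nonpos_of_nonneg h0.le ht.le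
      exact this.trans (mul_nonneg h1 hs.le)
    · have key : ((-t) * Real.sqrt (s ^ 2 + y ^ 2)) ^ 2 ≤ ((-s) * Real.sqrt (t ^ 2 + y ^ 2)) ^ 2 := by
        rw [mul_pow, mul_pow, hs2, ht2]
        nlinarith [mul_self_le_mul_self (neg_nonneg.mpr h1.le) (neg_le_neg hst), sq_nonneg y]
      have := Real.sqrt_le_sqrt key
      rw [Real.sqrt_sq (mul_nonneg (neg_nonneg.mpr h1.le) hs.le),
        Real.sqrt_sq (mul_nonneg (neg_nonneg.mpr h0.le) ht.le)] at this
      linarith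

lemma arg_mono_aux {z : ℂ} (hz : 0 < z.im) {a b : ℝ} (hab : a ≤ b) :
    (z - (a : ℂ)).arg ≤ (z - (b : ℂ)).arg := by
  have hima : (z - (a : ℂ)).im = z.im := by simp
  have himb : (z - (b : ℂ)).im = z.im := by simp
  rw [Complex.arg_of_im_pos (by rw [hima]; exact hz), Complex.arg_of_im_pos (by rw [himb]; exact hz)]
  have hra : (z - (a : ℂ)).re = z.re - a := by simp
  have hrb : (z - (b : ℂ)).re = z.re - b := by simp
  have haa : ‖z - (a : ℂ)‖ = Real.sqrt ((z.re - a) ^ 2 + z.im ^ 2) := by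
    rw [Complex.norm_def, Complex.normSq_apply, hra, hima]; ring_nf
  have hab' : ‖z - (b : ℂ)‖ = Real.sqrt ((z.re - b) ^ 2 + z.im ^ 2) := by
    rw [Complex.norm_def, Complex.normSq_apply, hrb, himb]; ring_nf
  rw [hra, hrb, haa, hab']
  rw [Real.arccos_eq_pi_div_two_sub_arcsin, Real.arccos_eq_pi_div_two_sub_arcsin]
  have := Real.monotone_arcsin (quot_mono hz (sub_le_sub_left hab z.re))
  linarith

lemma sum_arg_bound (N : ℕ) (d0 cN1 μm μp : ℝ) (c d μ : Fin N → ℝ)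
    (hd0cN1 : d0 < cN1) (hd0 : ∀ j, d0 < c j) (hcN1 : ∀ j, d j < cN1)
    (hcd : ∀ j, c j < d j) (hsep : ∀ i j : Fin N, i < j → d i < c j)
    (hμm : μm ≤ d0) (hμp : cN1 ≤ μp) (hμ : ∀ j, μ j ∈ Set.Icc (c j) (d j))
    (z : ℂ) (hz : 0 < z.im) :
    -(2 * Real.pi) <
      (z - (d0:ℂ)).arg + (z - (cN1:ℂ)).arg
        + ∑ j, ((z - (c j : ℂ)).arg + (z - (d j : ℂ)).arg)
        - (2 * (z - (μm:ℂ)).arg + 2 * (z - (μp:ℂ)).arg + 2 * ∑ j, (z - (μ j : ℂ)).arg) ∧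
      (z - (d0:ℂ)).arg + (z - (cN1:ℂ)).arg
        + ∑ j, ((z - (c j : ℂ)).arg + (z - (d j : ℂ)).arg)
        - (2 * (z - (μm:ℂ)).arg + 2 * (z - (μp:ℂ)).arg + 2 * ∑ j, (z - (μ j : ℂ)).arg) < 0 := by
  set A : ℝ → ℝ := fun a => (z - (a:ℂ)).arg with hAdef
  have hApos : ∀ a : ℝ, 0 < A a := arg_pos_aux hz
  have hAπ : ∀ a : ℝ, A a < Real.pi := arg_lt_pi_aux hz
  have hmono : ∀ {a b : ℝ}, a ≤ b → A a ≤ A b := fun h => arg_mono_aux hz h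
  have hsplit : ∑ j, (A (c j) + A (d j)) = ∑ j, A (c j) + ∑ j, A (d j) :=
    Finset.sum_add_distrib
  set SD := ∑ j, A (d j) with hSD
  set SC := ∑ j, A (c j) with hSC
  set SM := ∑ j, A (μ j) with hSM
  set Dn : ℕ → ℝ := fun i => if h : i < N then A (d ⟨i, h⟩) else 0 with hDn
  set Mn : ℕ → ℝ := fun i => if h : i < N then A (μ ⟨i, h⟩) else A μp with hMn
  set Un : ℕ → ℝ := fun i => if h : i < N then A (μ ⟨i, h⟩) else 0 with hUn
  set Cn : ℕ → ℝ := fun i => if h : i < N then A (c ⟨i, h⟩) else A cN1 with hCn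
  have hDS : ∑ i ∈ Finset.range N, Dn i = SD := by
    rw [hSD, ← Fin.sum_univ_eq_sum_range Dn N]
    exact Finset.sum_congr rfl fun j _ => by simp [hDn, j.isLt]
  have hMS : ∑ i ∈ Finset.range N, Mn i = SM := by
    rw [hSM, ← Fin.sum_univ_eq_sum_range Mn N]
    exact Finset.sum_congr rfl fun j _ => by simp [hMn, j.isLt]
  have hUS : ∑ i ∈ Finset.range N, Un i = SM := by
    rw [hSM, ← Fin.sum_univ_eq_sum_range Un N]
    exact Finset.sum_congr rfl fun j _ => by simp [hUn, j.isLt]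
  have hCS : ∑ i ∈ Finset.range N, Cn i = SC := by
    rw [hSC, ← Fin.sum_univ_eq_sum_range Cn N]
    exact Finset.sum_congr rfl fun j _ => by simp [hCn, j.isLt]
  have htele1 : SD - SM ≤ Mn N - Mn 0 := by
    have h1 : ∀ i, i < N → Dn i ≤ Mn (i + 1) := by
      intro i hi
      rw [hDn]; simp only [dif_pos hi]
      by_cases h2 : i + 1 < N
      · rw [hMn]; simp only [dif_pos h2]
        exact hmono (le_of_lt (lt_of_lt_of_le
          (hsep ⟨i, hi⟩ ⟨i + 1, h2⟩ (by simp [Fin.lt_def])) (hμ ⟨i + 1, h2⟩).1))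
      · rw [hMn]; simp only [dif_neg h2]
        exact hmono ((hcN1 ⟨i, hi⟩).le.trans hμp)
    have := tele_sum N Dn Mn h1
    rw [Finset.sum_sub_distrib, hDS, hMS] at this
    exact this
  have htele2 : SM - SC ≤ Cn N - Cn 0 := by
    have h2 : ∀ i, i < N → Un i ≤ Cn (i + 1) := by
      intro i hi
      rw [hUn]; simp only [dif_pos hi]
      by_cases h3 : i + 1 < N
      · rw [hCn]; simp only [dif_pos h3]
        exact hmono (le_of_lt (lt_of_le_of_lt (hμ ⟨i, hi⟩).2
          (hsep ⟨i, hi⟩ ⟨i + 1, h3⟩ (by simp [Fin.lt_def]))))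
      · rw [hCn]; simp only [dif_neg h3]
        exact hmono (le_of_lt (lt_of_le_of_lt (hμ ⟨i, hi⟩).2 (hcN1 ⟨i, hi⟩)))
    have := tele_sum N Un Cn h2
    rw [Finset.sum_sub_distrib, hUS, hCS] at this
    exact this
  have hMnN : Mn N = A μp := by rw [hMn]; simp
  have hCnN : Cn N = A cN1 := by rw [hCn]; simp
  have hMn0 : A d0 ≤ Mn 0 := by
    rw [hMn]
    by_cases h0 : 0 < N
    · simp only [dif_pos h0]
      exact hmono (le_of_lt (lt_of_lt_of_le (hd0 ⟨0, h0⟩) (hμ ⟨0, h0⟩).1))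
    · simp only [dif_neg h0]
      exact hmono (hd0cN1.le.trans hμp)
  have hCn0 : A μm ≤ Cn 0 := by
    rw [hCn]
    by_cases h0 : 0 < N
    · simp only [dif_pos h0]
      exact hmono (hμm.trans (hd0 ⟨0, h0⟩).le)
    · simp only [dif_neg h0]
      exact hmono (hμm.trans hd0cN1.le)
  have hF3 : SM ≤ SD := Finset.sum_le_sum fun j _ => hmono (hμ j).2
  have hF4 : SC ≤ SM := Finset.sum_le_sum fun j _ => hmono (hμ j).1
  have h5 : A μm ≤ A d0 := hmono hμm
  have h6 : A cN1 ≤ A μp := hmono hμp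
  have h7 : 0 < A μm := hApos μm
  have h8 : A μp < Real.pi := hAπ μp
  rw [hsplit]
  constructor
  · linarith
  · linarith

end HerglotzAux

/-- `h` is holomorphic on the open upper half-plane `ℍ`, maps `ℍ` to `ℍ`, and satisfies
`h(z)² = (1+d₀−μ₋)²(1+μ₊−c_{N+1})²·(z−d₀)(z−c_{N+1})·∏ⱼ(cⱼ−z)(dⱼ−z)
  / ((μ₋−z)²(μ₊−z)²·∏ⱼ(μⱼ−z)²)` there. -/
def IsHerglotzSqrtJacobi (N : ℕ) (d0 cN1 μm μp : ℝ) (c d μ : Fin N → ℝ)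
    (h : ℂ → ℂ) : Prop :=
  DifferentiableOn ℂ h {z : ℂ | 0 < z.im} ∧
  (∀ z ∈ {z : ℂ | 0 < z.im}, 0 < (h z).im) ∧
  (∀ z ∈ {z : ℂ | 0 < z.im},
    (h z) ^ 2 = ((1 + d0 - μm : ℝ) : ℂ) ^ 2 * ((1 + μp - cN1 : ℝ) : ℂ) ^ 2 *
        ((z - (d0 : ℂ)) * (z - (cN1 : ℂ))) *
        (∏ j, ((c j : ℂ) - z) * ((d j : ℂ) - z)) /
      (((μm : ℂ) - z) ^ 2 * ((μp : ℂ) - z) ^ 2 * ∏ j, ((μ j : ℂ) - z) ^ 2))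

theorem stmt7 (N : ℕ) (d0 cN1 μm μp : ℝ) (c d μ : Fin N → ℝ)
    (hd0cN1 : d0 < cN1) (hd0 : ∀ j, d0 < c j) (hcN1 : ∀ j, d j < cN1)
    (hcd : ∀ j, c j < d j) (hsep : ∀ i j : Fin N, i < j → d i < c j)
    (hμm : μm ≤ d0) (hμp : cN1 ≤ μp)
    (hμ : ∀ j, μ j ∈ Set.Icc (c j) (d j)) :
    ∃ h : ℂ → ℂ, IsHerglotzSqrtJacobi N d0 cN1 μm μp c d μ h ∧
      ∀ h' : ℂ → ℂ, IsHerglotzSqrtJacobi N d0 cN1 μm μp c d μ h' →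
        Set.EqOn h' h {z : ℂ | 0 < z.im} := by
  set K : ℝ := (1 + d0 - μm) * (1 + μp - cN1) with hKdef
  have hKpos : 0 < K := by
    have h1 : (0:ℝ) < 1 + d0 - μm := by linarith
    have h2 : (0:ℝ) < 1 + μp - cN1 := by linarith
    exact mul_pos h1 h2
  set L : ℂ → ℂ := fun z =>
    (Complex.log (z - (d0:ℂ)) + Complex.log (z - (cN1:ℂ))
      + ∑ j, (Complex.log (z - (c j : ℂ)) + Complex.log (z - (d j : ℂ))))
    - (2 * Complex.log (z - (μm:ℂ)) + 2 * Complex.log (z - (μp:ℂ))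
      + 2 * ∑ j, Complex.log (z - (μ j : ℂ))) with hLdef
  set h : ℂ → ℂ := fun z => (((-K : ℝ)) : ℂ) * Complex.exp (L z / 2) with hhdef
  have hne : ∀ (z : ℂ), 0 < z.im → ∀ (a : ℝ), z - (a:ℂ) ≠ 0 := by
    intro z hz a hzero
    have : (z - (a:ℂ)).im = z.im := by simp
    rw [hzero] at this
    simp at this
    exact hz.ne' this.symm
  have hslit : ∀ (z : ℂ), 0 < z.im → ∀ (a : ℝ), z - (a:ℂ) ∈ Complex.slitPlane := by
    intro z hz a
    exact Or.inr (by simp [hz.ne'])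
  -- differentiability
  have hdiff : DifferentiableOn ℂ h {z : ℂ | 0 < z.im} := by
    intro z hz
    simp only [Set.mem_setOf_eq] at hz
    apply DifferentiableAt.differentiableWithinAt
    have hlog : ∀ a : ℝ, DifferentiableAt ℂ (fun w : ℂ => Complex.log (w - (a:ℂ))) z :=
      fun a => (differentiableAt_id.sub_const _).clog (hslit z hz a)
    have hL : DifferentiableAt ℂ L z := by
      rw [hLdef]
      apply DifferentiableAt.sub
      · exact ((hlog d0).add (hlog cN1)).add
          (DifferentiableAt.fun_sum fun j _ => (hlog (c j)).add (hlog (d j)))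
      · exact ((differentiableAt_const _).mul (hlog μm)).add
          (((differentiableAt_const _).mul (hlog μp))) |>.add
          ((differentiableAt_const _).mul (DifferentiableAt.fun_sum fun j _ => hlog (μ j)))
    rw [hhdef]
    exact (differentiableAt_const _).mul ((hL.div_const 2).cexp)
  -- imaginary part positivity
  have him : ∀ z ∈ {z : ℂ | 0 < z.im}, 0 < (h z).im := by
    intro z hz
    simp only [Set.mem_setOf_eq] at hz
    have hLim : (L z).im =
        (z - (d0:ℂ)).arg + (z - (cN1:ℂ)).arg
          + ∑ j, ((z - (c j : ℂ)).arg + (z - (d j : ℂ)).arg)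
          - (2 * (z - (μm:ℂ)).arg + 2 * (z - (μp:ℂ)).arg + 2 * ∑ j, (z - (μ j : ℂ)).arg) := by
      rw [hLdef]
      simp [Complex.sub_im, Complex.add_im, Complex.mul_im, Complex.im_sum, Complex.log_im]
    obtain ⟨hlow, hup⟩ := sum_arg_bound N d0 cN1 μm μp c d μ hd0cN1 hd0 hcN1 hcd hsep hμm hμp hμ z hz
    rw [← hLim] at hlow hup
    have hdiv : (L z / 2).im = (L z).im / 2 := by
      rw [div_eq_mul_inv]
      simp [Complex.mul_im]
      ring
    have hexpim : (Complex.exp (L z / 2)).im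
        = Real.exp ((L z / 2).re) * Real.sin ((L z).im / 2) := by
      rw [Complex.exp_im, hdiv]
    have hsin : Real.sin ((L z).im / 2) < 0 := by
      apply Real.sin_neg_of_neg_of_neg_pi_lt
      · linarith
      · linarith
    have him2 : (h z).im = (-K) * ((Complex.exp (L z / 2)).im) := by
      rw [hhdef]; simp [Complex.mul_im]
    rw [him2, hexpim]
    have hep := Real.exp_pos ((L z / 2).re)
    nlinarith [mul_pos (mul_pos hKpos hep) (neg_pos.mpr hsin)]
  -- the functional equation
  have heq : ∀ z ∈ {z : ℂ | 0 < z.im},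
      (h z) ^ 2 = ((1 + d0 - μm : ℝ) : ℂ) ^ 2 * ((1 + μp - cN1 : ℝ) : ℂ) ^ 2 *
          ((z - (d0 : ℂ)) * (z - (cN1 : ℂ))) *
          (∏ j, ((c j : ℂ) - z) * ((d j : ℂ) - z)) /
        (((μm : ℂ) - z) ^ 2 * ((μp : ℂ) - z) ^ 2 * ∏ j, ((μ j : ℂ) - z) ^ 2) := by
    intro z hz
    simp only [Set.mem_setOf_eq] at hz
    have hne' := hne z hz
    have hexpL : Complex.exp (L z) =
        ((z - (d0:ℂ)) * (z - (cN1:ℂ)) * ∏ j, ((z - (c j : ℂ)) * (z - (d j : ℂ)))) /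
        ((z - (μm:ℂ)) ^ 2 * (z - (μp:ℂ)) ^ 2 * ∏ j, (z - (μ j : ℂ)) ^ 2) := by
      rw [hLdef]
      rw [Complex.exp_sub]
      congr 1
      · rw [Complex.exp_add, Complex.exp_add, Complex.exp_sum]
        rw [Complex.exp_log (hne' d0), Complex.exp_log (hne' cN1)]
        congr 1
        exact Finset.prod_congr rfl fun j _ => by
          rw [Complex.exp_add, Complex.exp_log (hne' (c j)), Complex.exp_log (hne' (d j))]
      · rw [Complex.exp_add, Complex.exp_add]
        have e1 : Complex.exp (2 * Complex.log (z - (μm:ℂ))) = (z - (μm:ℂ)) ^ 2 := by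
          rw [two_mul, Complex.exp_add, Complex.exp_log (hne' μm), sq]
        have e2 : Complex.exp (2 * Complex.log (z - (μp:ℂ))) = (z - (μp:ℂ)) ^ 2 := by
          rw [two_mul, Complex.exp_add, Complex.exp_log (hne' μp), sq]
        have e3 : Complex.exp (2 * ∑ j, Complex.log (z - (μ j : ℂ)))
            = ∏ j, (z - (μ j : ℂ)) ^ 2 := by
          rw [two_mul, Complex.exp_add, Complex.exp_sum, ← Finset.prod_mul_distrib]
          exact Finset.prod_congr rfl fun j _ => by
            rw [Complex.exp_log (hne' (μ j)), sq]
        rw [e1, e2, e3]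
    have hsq : (h z) ^ 2 = ((K:ℝ) : ℂ) ^ 2 * Complex.exp (L z) := by
      rw [hhdef]
      have : Complex.exp (L z / 2) ^ 2 = Complex.exp (L z) := by
        rw [sq, ← Complex.exp_add]
        congr 1
        ring
      rw [mul_pow, this]
      push_cast
      ring
    rw [hsq, hexpL]
    have hprod1 : ∏ j, (((c j :ℝ):ℂ) - z) * (((d j :ℝ):ℂ) - z)
        = ∏ j, ((z - (c j : ℂ)) * (z - (d j : ℂ))) :=
      Finset.prod_congr rfl fun j _ => by ring
    have hprod2 : ∏ j, (((μ j :ℝ):ℂ) - z) ^ 2 = ∏ j, (z - (μ j : ℂ)) ^ 2 :=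
      Finset.prod_congr rfl fun j _ => by ring
    have hKc : ((K:ℝ):ℂ) = ((1 + d0 - μm : ℝ) : ℂ) * ((1 + μp - cN1 : ℝ) : ℂ) := by
      rw [hKdef]; push_cast; ring
    have hdeneq : ((μm:ℂ) - z) ^ 2 * ((μp:ℂ) - z) ^ 2 * ∏ j, ((μ j : ℂ) - z) ^ 2
        = (z - (μm:ℂ)) ^ 2 * (z - (μp:ℂ)) ^ 2 * ∏ j, (z - (μ j : ℂ)) ^ 2 := by
      rw [hprod2]; ring
    rw [hprod1, hdeneq, ← mul_div_assoc]
    congr 1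
    rw [hKc]
    ring
  refine ⟨h, ⟨hdiff, him, heq⟩, ?_⟩
  intro h' ⟨hd', him', heq'⟩ z hz
  have e1 := heq' z hz
  have e2 := heq z hz
  have hfac : (h' z - h z) * (h' z + h z) = 0 := by
    linear_combination e1 - e2
  rcases mul_eq_zero.mp hfac with hc | hc
  · exact sub_eq_zero.mp hc
  · exfalso
    have i1 := him' z hz
    have i2 := him z hz
    have : (h' z).im + (h z).im = 0 := by
      have := congrArg Complex.im hc
      simpa using this
    linarith
end

section
/- Let N ≥ 0 be an integer, let d₀ < c₁ < d₁ < ⋯ < c_N < d_N < c_{N+1} be real numbers, and let μ_j ∈ [c_j, d_j] for j = 1,…,N. There exists exactly one function h, holomorphic on ℍ = {z ∈ ℂ : Im z > 0}, with Im h(z) > 0 for all z ∈ ℍ and h(z)² = (z − d₀)(z − c_{N+1}) · ∏_{j=1}^N (c_j − z)(d_j − z)/(μ_j − z)² on ℍ; moreover, h(z) − z is bounded on {z ∈ ℍ : |z| ≥ R} for some R > 0, i.e., h(z) = z + O(1) as |z| → ∞ in ℍ. -/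
open Complex Finset Real

-- basic arg facts
lemma argPos {w : ℂ} (hw : 0 < w.im) : 0 < w.arg := by
  rcases lt_or_eq_of_le (Complex.arg_nonneg_iff.mpr hw.le) with h | h
  · exact h
  · exfalso
    have := Complex.arg_eq_zero_iff.mp h.symm
    linarith [this.2]

lemma argLtPi {w : ℂ} (hw : 0 < w.im) : w.arg < π :=
  Complex.arg_lt_pi_iff.mpr (Or.inr (by positivity))

lemma arccos_anti : Antitone Real.arccos := by
  intro x y h
  simp only [Real.arccos_eq_pi_div_two_sub_arcsin]
  linarith [Real.monotone_arcsin h]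

lemma divSqrtMono {x₁ x₂ y : ℝ} (hy : 0 < y) (h : x₁ ≤ x₂) :
    x₁ / Real.sqrt (x₁^2+y^2) ≤ x₂ / Real.sqrt (x₂^2+y^2) := by
  have h1 : (0:ℝ) < Real.sqrt (x₁^2+y^2) := Real.sqrt_pos.mpr (by positivity)
  have h2 : (0:ℝ) < Real.sqrt (x₂^2+y^2) := Real.sqrt_pos.mpr (by positivity)
  rw [div_le_div_iff₀ h1 h2]
  rcases le_or_gt 0 x₁ with hx1 | hx1
  · have hx2 : 0 ≤ x₂ := le_trans hx1 h
    have s1 : Real.sqrt (x₁^2+y^2) ^ 2 = x₁^2+y^2 := Real.sq_sqrt (by positivity)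
    have s2 : Real.sqrt (x₂^2+y^2) ^ 2 = x₂^2+y^2 := Real.sq_sqrt (by positivity)
    have key : (x₁ * Real.sqrt (x₂^2+y^2))^2 ≤ (x₂ * Real.sqrt (x₁^2+y^2))^2 := by
      rw [mul_pow, mul_pow, s1, s2]
      nlinarith [mul_le_mul_of_nonneg_right (pow_le_pow_left₀ hx1 h 2) (sq_nonneg y)]
    exact (pow_le_pow_iff_left₀ (by positivity) (by positivity) (by norm_num)).mp key
  · rcases le_or_gt 0 x₂ with hx2 | hx2
    · have : x₁ * Real.sqrt (x₂^2+y^2) ≤ 0 := mul_nonpos_of_nonpos_of_nonneg hx1.le h2.le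
      nlinarith [mul_nonneg hx2 h1.le]
    · have s1 : Real.sqrt (x₁^2+y^2) ^ 2 = x₁^2+y^2 := Real.sq_sqrt (by positivity)
      have s2 : Real.sqrt (x₂^2+y^2) ^ 2 = x₂^2+y^2 := Real.sq_sqrt (by positivity)
      have key : ((-x₂) * Real.sqrt (x₁^2+y^2))^2 ≤ ((-x₁) * Real.sqrt (x₂^2+y^2))^2 := by
        rw [mul_pow, mul_pow, s1, s2]
        nlinarith [mul_le_mul_of_nonneg_right
          (pow_le_pow_left₀ (neg_nonneg.mpr hx2.le) (neg_le_neg h) 2) (sq_nonneg y)]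
      have := (pow_le_pow_iff_left₀ (mul_nonneg (neg_nonneg.mpr hx2.le) h1.le)
        (mul_nonneg (neg_nonneg.mpr hx1.le) h2.le) (by norm_num : (2:ℕ) ≠ 0)).mp key
      nlinarith

lemma argAnti {z : ℂ} (hz : 0 < z.im) {a b : ℝ} (hab : a ≤ b) :
    (z - (a:ℂ)).arg ≤ (z - (b:ℂ)).arg := by
  have ia : (z - (a:ℂ)).im = z.im := by simp
  have ib : (z - (b:ℂ)).im = z.im := by simp
  rw [Complex.arg_of_im_pos (ia ▸ hz), Complex.arg_of_im_pos (ib ▸ hz)]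
  apply arccos_anti
  have ra : (z - (a:ℂ)).re = z.re - a := by simp
  have rb : (z - (b:ℂ)).re = z.re - b := by simp
  have aa : ‖z - (a:ℂ)‖ = Real.sqrt ((z.re - a)^2 + z.im^2) := by
    rw [Complex.norm_def, Complex.normSq_apply, ia, ra]; ring_nf
  have ab : ‖z - (b:ℂ)‖ = Real.sqrt ((z.re - b)^2 + z.im^2) := by
    rw [Complex.norm_def, Complex.normSq_apply, ib, rb]; ring_nf
  rw [ra, rb, aa, ab]
  exact divSqrtMono hz (by linarith)

lemma sumLenLe : ∀ (n : ℕ) (a b : ℕ → ℝ) (A B : ℝ),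
    (∀ i, i < n → A ≤ a i) → (∀ i, i < n → a i ≤ b i) →
    (∀ i j, i < j → j < n → b i ≤ a j) → (∀ i, i < n → b i ≤ B) → A ≤ B →
    ∑ i ∈ Finset.range n, (b i - a i) ≤ B - A := by
  intro n
  induction n with
  | zero => intro a b A B _ _ _ _ hAB; simp; linarith
  | succ m ih =>
    intro a b A B hA hab hsep hB hAB
    rw [Finset.sum_range_succ]
    have h1 : ∑ i ∈ Finset.range m, (b i - a i) ≤ a m - A := by
      apply ih a b A (a m)
      · exact fun i hi => hA i (Nat.lt_succ_of_lt hi)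
      · exact fun i hi => hab i (Nat.lt_succ_of_lt hi)
      · exact fun i j hij hj => hsep i j hij (Nat.lt_succ_of_lt hj)
      · exact fun i hi => hsep i m hi (Nat.lt_succ_self m)
      · exact hA m (Nat.lt_succ_self m)
    have h2 : b m ≤ B := hB m (Nat.lt_succ_self m)
    linarith

lemma imDivTwo (w : ℂ) : (w / 2).im = w.im / 2 := by
  have : (w / 2) = w * ((1/2 : ℝ) : ℂ) := by push_cast; ring
  rw [this, Complex.mul_im]
  simp; ring

lemma logShift {z : ℂ} (hz : 0 < z.im) {a : ℝ} (ha : ‖(a:ℂ) / z‖ ≤ 1/2) :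
    Complex.log (z - a) = Complex.log z + Complex.log (1 - (a:ℂ)/z) := by
  have hz0 : z ≠ 0 := fun h => by simp [h] at hz
  have hza : z - (a:ℂ) ≠ 0 := by
    intro h
    have : (z - (a:ℂ)).im = 0 := by rw [h]; simp
    simp at this; linarith
  have hre : (0:ℝ) < (1 - (a:ℂ)/z).re := by
    have : |((a:ℂ)/z).re| ≤ 1/2 := le_trans (Complex.abs_re_le_norm _) ha
    have h1 : (1 - (a:ℂ)/z).re = 1 - ((a:ℂ)/z).re := by simp
    rw [h1]
    cases abs_le.mp this with | intro l r => linarith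
  have hne : (1 : ℂ) - (a:ℂ)/z ≠ 0 := by
    intro h
    rw [h] at hre; simp at hre
  have hexp : Complex.exp (Complex.log (z - a)) =
      Complex.exp (Complex.log z + Complex.log (1 - (a:ℂ)/z)) := by
    rw [Complex.exp_log hza, Complex.exp_add, Complex.exp_log hz0, Complex.exp_log hne]
    field_simp
  obtain ⟨n, hn⟩ := Complex.exp_eq_exp_iff_exists_int.mp hexp
  have him : (Complex.log (z - a)).im =
      (Complex.log z).im + (Complex.log (1 - (a:ℂ)/z)).im + (n : ℝ) * (2 * π) := by
    have := congrArg Complex.im hn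
    simpa [Complex.add_im, Complex.mul_im] using this
  have b1 : 0 < (z - (a:ℂ)).arg := argPos (by simp [hz])
  have b2 : (z - (a:ℂ)).arg < π := argLtPi (by simp [hz])
  have b3 : 0 < z.arg := argPos hz
  have b4 : z.arg < π := argLtPi hz
  have b5 : |(1 - (a:ℂ)/z).arg| < π / 2 :=
    Complex.abs_arg_lt_pi_div_two_iff.mpr (Or.inl hre)
  rw [Complex.log_im, Complex.log_im, Complex.log_im] at him
  have hb5 := abs_lt.mp b5
  have hπ := Real.pi_pos
  have hn0 : n = 0 := by
    have habs : |(n:ℝ)| < 1 := by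
      rw [abs_lt]
      constructor
      · by_contra hc
        push_neg at hc
        have : (n:ℝ) * (2 * π) ≤ -1 * (2 * π) := by
          apply mul_le_mul_of_nonneg_right hc (by linarith)
        linarith
      · by_contra hc
        push_neg at hc
        have : 1 * (2 * π) ≤ (n:ℝ) * (2 * π) := by
          apply mul_le_mul_of_nonneg_right hc (by linarith)
        linarith
    have : |n| < 1 := by exact_mod_cast (by push_cast; exact habs : |(n:ℝ)| < (1:ℝ))
    exact Int.abs_lt_one_iff.mp this
  rw [hn0] at hn
  simpa using hn

noncomputable def Saux (N : ℕ) (d0 cN1 : ℝ) (c d μ : Fin N → ℝ) (z : ℂ) : ℂ :=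
  Complex.log (z - d0) + Complex.log (z - cN1) +
    ∑ j, (Complex.log (z - c j) + Complex.log (z - d j) - 2 * Complex.log (z - μ j))

lemma subRealNe {z : ℂ} (hz : 0 < z.im) (a : ℝ) : z - (a:ℂ) ≠ 0 := by
  intro h
  have : (z - (a:ℂ)).im = 0 := by rw [h]; simp
  simp at this; linarith

lemma exp_Saux_eq (N : ℕ) (d0 cN1 : ℝ) (c d μ : Fin N → ℝ) {z : ℂ} (hz : 0 < z.im) :
    Complex.exp (Saux N d0 cN1 c d μ z) = (z - (d0:ℂ)) * (z - (cN1:ℂ)) *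
      ∏ j, ((c j : ℂ) - z) * ((d j : ℂ) - z) / ((μ j : ℂ) - z) ^ 2 := by
  unfold Saux
  rw [Complex.exp_add, Complex.exp_add, Complex.exp_sum,
    Complex.exp_log (subRealNe hz d0), Complex.exp_log (subRealNe hz cN1)]
  congr 1
  apply Finset.prod_congr rfl
  intro j _
  rw [Complex.exp_sub, Complex.exp_add, Complex.exp_log (subRealNe hz (c j)),
    Complex.exp_log (subRealNe hz (d j)),
    show (2 : ℂ) * Complex.log (z - μ j) = ((2:ℕ):ℂ) * Complex.log (z - μ j) by norm_num,
    Complex.exp_nat_mul, Complex.exp_log (subRealNe hz (μ j))]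
  rw [show ((c j:ℂ) - z) * ((d j:ℂ) - z) = (z - c j) * (z - d j) by ring,
    show ((μ j:ℂ) - z) ^ 2 = (z - μ j) ^ 2 by ring]

lemma im_Saux (N : ℕ) (d0 cN1 : ℝ) (c d μ : Fin N → ℝ) (z : ℂ) :
    (Saux N d0 cN1 c d μ z).im = (z - (d0:ℂ)).arg + (z - (cN1:ℂ)).arg +
      ∑ j, ((z - (c j:ℂ)).arg + (z - (d j:ℂ)).arg - 2 * (z - (μ j:ℂ)).arg) := by
  unfold Saux
  rw [Complex.add_im, Complex.add_im, Complex.im_sum]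
  rw [Complex.log_im, Complex.log_im]
  congr 1
  apply Finset.sum_congr rfl
  intro j _
  rw [Complex.sub_im, Complex.add_im, Complex.log_im, Complex.log_im, Complex.mul_im]
  simp [Complex.log_im]

lemma im_Saux_bounds (N : ℕ) (d0 cN1 : ℝ) (c d μ : Fin N → ℝ)
    (hd0cN1 : d0 < cN1) (hd0 : ∀ j, d0 < c j) (hcN1 : ∀ j, d j < cN1)
    (hcd : ∀ j, c j < d j) (hsep : ∀ i j : Fin N, i < j → d i < c j)
    (hμ : ∀ j, μ j ∈ Set.Icc (c j) (d j)) {z : ℂ} (hz : 0 < z.im) :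
    0 < (Saux N d0 cN1 c d μ z).im ∧ (Saux N d0 cN1 c d μ z).im < 2 * π := by
  classical
  have hπ := Real.pi_pos
  rw [im_Saux]
  set A0 := (z - (d0:ℂ)).arg with hA0def
  set A1 := (z - (cN1:ℂ)).arg with hA1def
  have hA0 : 0 < A0 := argPos (by simp [hz])
  have hA1 : A1 < π := argLtPi (by simp [hz])
  have hA0A1 : A0 ≤ A1 := argAnti hz hd0cN1.le
  -- key: sum of interval lengths
  have key : ∑ j : Fin N, ((z - (d j:ℂ)).arg - (z - (c j:ℂ)).arg) ≤ A1 - A0 := by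
    set a : ℕ → ℝ := fun i => if hi : i < N then (z - ((c ⟨i, hi⟩ : ℝ) : ℂ)).arg else 0
      with hadef
    set b : ℕ → ℝ := fun i => if hi : i < N then (z - ((d ⟨i, hi⟩ : ℝ) : ℂ)).arg else 0
      with hbdef
    have hconv : ∑ j : Fin N, ((z - (d j:ℂ)).arg - (z - (c j:ℂ)).arg)
        = ∑ i ∈ Finset.range N, (b i - a i) := by
      rw [← Fin.sum_univ_eq_sum_range (fun i => b i - a i) N]
      apply Finset.sum_congr rfl
      intro j _
      simp [hadef, hbdef, j.isLt]
    rw [hconv]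
    apply sumLenLe N a b A0 A1
    · intro i hi
      simp only [hadef, dif_pos hi]
      exact argAnti hz (hd0 ⟨i, hi⟩).le
    · intro i hi
      simp only [hadef, hbdef, dif_pos hi]
      exact argAnti hz (hcd ⟨i, hi⟩).le
    · intro i j hij hj
      have hi : i < N := lt_trans hij hj
      simp only [hadef, hbdef, dif_pos hi, dif_pos hj]
      exact argAnti hz (hsep ⟨i, hi⟩ ⟨j, hj⟩ hij).le
    · intro i hi
      simp only [hbdef, dif_pos hi]
      exact argAnti hz (hcN1 ⟨i, hi⟩).le
    · exact hA0A1
  have low : ∑ j : Fin N, ((z - (c j:ℂ)).arg - (z - (d j:ℂ)).arg)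
      ≤ ∑ j : Fin N, ((z - (c j:ℂ)).arg + (z - (d j:ℂ)).arg - 2 * (z - (μ j:ℂ)).arg) := by
    apply Finset.sum_le_sum
    intro j _
    have := argAnti hz (hμ j).2
    linarith
  have high : ∑ j : Fin N, ((z - (c j:ℂ)).arg + (z - (d j:ℂ)).arg - 2 * (z - (μ j:ℂ)).arg)
      ≤ ∑ j : Fin N, ((z - (d j:ℂ)).arg - (z - (c j:ℂ)).arg) := by
    apply Finset.sum_le_sum
    intro j _
    have := argAnti hz (hμ j).1
    linarith
  have e1 : ∑ j : Fin N, ((z - (c j:ℂ)).arg - (z - (d j:ℂ)).arg)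
      = -∑ j : Fin N, ((z - (d j:ℂ)).arg - (z - (c j:ℂ)).arg) := by
    rw [← Finset.sum_neg_distrib]
    apply Finset.sum_congr rfl
    intro j _
    ring
  constructor
  · have : -(A1 - A0) ≤ ∑ j : Fin N, ((z - (c j:ℂ)).arg + (z - (d j:ℂ)).arg
        - 2 * (z - (μ j:ℂ)).arg) := by
      rw [e1] at low
      linarith
    linarith
  · linarith

lemma diff_Saux (N : ℕ) (d0 cN1 : ℝ) (c d μ : Fin N → ℝ) {z : ℂ} (hz : 0 < z.im) :
    DifferentiableAt ℂ (Saux N d0 cN1 c d μ) z := by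
  have hslit : ∀ a : ℝ, (z - (a:ℂ)) ∈ Complex.slitPlane := fun a =>
    Complex.mem_slitPlane_iff.mpr (Or.inr (by simp; linarith))
  have hlog : ∀ a : ℝ, DifferentiableAt ℂ (fun w : ℂ => Complex.log (w - (a:ℂ))) z :=
    fun a => DifferentiableAt.clog (differentiableAt_id.sub (differentiableAt_const _)) (hslit a)
  unfold Saux
  exact ((hlog d0).add (hlog cN1)).add (DifferentiableAt.fun_sum fun j _ =>
    (((hlog (c j)).add (hlog (d j))).sub ((hlog (μ j)).const_mul 2)))

noncomputable def Taux (N : ℕ) (d0 cN1 : ℝ) (c d μ : Fin N → ℝ) (z : ℂ) : ℂ :=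
  Complex.log (1 - (d0:ℂ)/z) + Complex.log (1 - (cN1:ℂ)/z) +
    ∑ j, (Complex.log (1 - (c j:ℂ)/z) + Complex.log (1 - (d j:ℂ)/z)
      - 2 * Complex.log (1 - (μ j:ℂ)/z))

lemma Saux_decomp (N : ℕ) (d0 cN1 : ℝ) (c d μ : Fin N → ℝ) {z : ℂ} (hz : 0 < z.im)
    (hfrac : ∀ a : ℝ, d0 ≤ a → a ≤ cN1 → ‖(a:ℂ)/z‖ ≤ 1/2)
    (hd0cN1 : d0 < cN1) (hd0 : ∀ j, d0 < c j) (hcN1 : ∀ j, d j < cN1)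
    (hcd : ∀ j, c j < d j) (hμ : ∀ j, μ j ∈ Set.Icc (c j) (d j)) :
    Saux N d0 cN1 c d μ z = 2 * Complex.log z + Taux N d0 cN1 c d μ z := by
  have hcle : ∀ j, d0 ≤ c j ∧ c j ≤ cN1 := fun j =>
    ⟨(hd0 j).le, le_trans (hcd j).le (hcN1 j).le⟩
  have hdle : ∀ j, d0 ≤ d j ∧ d j ≤ cN1 := fun j =>
    ⟨le_trans (hd0 j).le (hcd j).le, (hcN1 j).le⟩
  have hμle : ∀ j, d0 ≤ μ j ∧ μ j ≤ cN1 := fun j =>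
    ⟨le_trans (hd0 j).le (hμ j).1, le_trans (hμ j).2 (hcN1 j).le⟩
  unfold Saux Taux
  rw [logShift hz (hfrac d0 le_rfl hd0cN1.le), logShift hz (hfrac cN1 hd0cN1.le le_rfl)]
  have hsum : ∑ j, (Complex.log (z - (c j:ℂ)) + Complex.log (z - (d j:ℂ))
      - 2 * Complex.log (z - (μ j:ℂ)))
      = ∑ j, (Complex.log (1 - (c j:ℂ)/z) + Complex.log (1 - (d j:ℂ)/z)
      - 2 * Complex.log (1 - (μ j:ℂ)/z)) := by
    apply Finset.sum_congr rfl
    intro j _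
    rw [logShift hz (hfrac (c j) (hcle j).1 (hcle j).2),
      logShift hz (hfrac (d j) (hdle j).1 (hdle j).2),
      logShift hz (hfrac (μ j) (hμle j).1 (hμle j).2)]
    ring
  rw [hsum]
  ring

lemma Taux_bound (N : ℕ) (d0 cN1 : ℝ) (c d μ : Fin N → ℝ) {z : ℂ} (hz : z ≠ 0) {K : ℝ}
    (habs : ∀ a : ℝ, d0 ≤ a → a ≤ cN1 → |a| ≤ K)
    (hfrac : ∀ a : ℝ, d0 ≤ a → a ≤ cN1 → ‖(a:ℂ)/z‖ ≤ 1/2)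
    (hd0cN1 : d0 < cN1) (hd0 : ∀ j, d0 < c j) (hcN1 : ∀ j, d j < cN1)
    (hcd : ∀ j, c j < d j) (hμ : ∀ j, μ j ∈ Set.Icc (c j) (d j)) :
    ‖Taux N d0 cN1 c d μ z‖ ≤ ((3 + 6 * N) * K) / ‖z‖ := by
  have hza : 0 < ‖z‖ := by
    simpa [norm_pos_iff] using hz
  have hterm : ∀ a : ℝ, d0 ≤ a → a ≤ cN1 →
      ‖Complex.log (1 - (a:ℂ)/z)‖ ≤ (3/2) * (K / ‖z‖) := by
    intro a ha1 ha2
    have h1 : (1 : ℂ) - (a:ℂ)/z = 1 + (-((a:ℂ)/z)) := by ring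
    rw [h1]
    have hn : ‖-((a:ℂ)/z)‖ ≤ 1/2 := by
      rw [norm_neg]
      exact hfrac a ha1 ha2
    calc ‖Complex.log (1 + -((a:ℂ)/z))‖
        ≤ (3/2) * ‖-((a:ℂ)/z)‖ := Complex.norm_log_one_add_half_le_self hn
      _ ≤ (3/2) * (K / ‖z‖) := by
          apply mul_le_mul_of_nonneg_left _ (by norm_num)
          rw [norm_neg, norm_div, Complex.norm_real, Real.norm_eq_abs]
          exact (div_le_div_iff_of_pos_right hza).mpr (habs a ha1 ha2)
  have hcle : ∀ j, d0 ≤ c j ∧ c j ≤ cN1 := fun j =>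
    ⟨(hd0 j).le, le_trans (hcd j).le (hcN1 j).le⟩
  have hdle : ∀ j, d0 ≤ d j ∧ d j ≤ cN1 := fun j =>
    ⟨le_trans (hd0 j).le (hcd j).le, (hcN1 j).le⟩
  have hμle : ∀ j, d0 ≤ μ j ∧ μ j ≤ cN1 := fun j =>
    ⟨le_trans (hd0 j).le (hμ j).1, le_trans (hμ j).2 (hcN1 j).le⟩
  unfold Taux
  have hKz : 0 ≤ K / ‖z‖ := by
    have : (0:ℝ) ≤ |d0| := abs_nonneg _
    have hK : 0 ≤ K := le_trans this (habs d0 le_rfl hd0cN1.le)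
    positivity
  have hsumb : ‖∑ j : Fin N, (Complex.log (1 - (c j:ℂ)/z)
      + Complex.log (1 - (d j:ℂ)/z) - 2 * Complex.log (1 - (μ j:ℂ)/z))‖
      ≤ N * (6 * (K / ‖z‖)) := by
    calc ‖∑ j : Fin N, (Complex.log (1 - (c j:ℂ)/z)
        + Complex.log (1 - (d j:ℂ)/z) - 2 * Complex.log (1 - (μ j:ℂ)/z))‖
        ≤ ∑ j : Fin N, ‖(Complex.log (1 - (c j:ℂ)/z)
          + Complex.log (1 - (d j:ℂ)/z) - 2 * Complex.log (1 - (μ j:ℂ)/z))‖ :=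
        norm_sum_le _ _
      _ ≤ ∑ _j : Fin N, (6 * (K / ‖z‖)) := by
          apply Finset.sum_le_sum
          intro j _
          have t1 := hterm (c j) (hcle j).1 (hcle j).2
          have t2 := hterm (d j) (hdle j).1 (hdle j).2
          have t3 := hterm (μ j) (hμle j).1 (hμle j).2
          have habs2 : ‖2 * Complex.log (1 - (μ j:ℂ)/z)‖
              = 2 * ‖Complex.log (1 - (μ j:ℂ)/z)‖ := by
            rw [norm_mul]; simp
          calc ‖_‖ ≤ ‖Complex.log (1 - (c j:ℂ)/z)
              + Complex.log (1 - (d j:ℂ)/z)‖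
              + ‖2 * Complex.log (1 - (μ j:ℂ)/z)‖ := norm_sub_le _ _
            _ ≤ ‖Complex.log (1 - (c j:ℂ)/z)‖
              + ‖Complex.log (1 - (d j:ℂ)/z)‖
              + 2 * ‖Complex.log (1 - (μ j:ℂ)/z)‖ := by
                rw [habs2]
                have := norm_add_le (Complex.log (1 - (c j:ℂ)/z))
                  (Complex.log (1 - (d j:ℂ)/z))
                linarith
            _ ≤ 6 * (K / ‖z‖) := by linarith
      _ = N * (6 * (K / ‖z‖)) := by
          rw [Finset.sum_const, Finset.card_univ, Fintype.card_fin, nsmul_eq_mul]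
  have t0 := hterm d0 le_rfl hd0cN1.le
  have t1 := hterm cN1 hd0cN1.le le_rfl
  calc ‖_‖ ≤ ‖Complex.log (1 - (d0:ℂ)/z)
      + Complex.log (1 - (cN1:ℂ)/z)‖ + ‖∑ j : Fin N,
      (Complex.log (1 - (c j:ℂ)/z) + Complex.log (1 - (d j:ℂ)/z)
      - 2 * Complex.log (1 - (μ j:ℂ)/z))‖ := norm_add_le _ _
    _ ≤ (‖Complex.log (1 - (d0:ℂ)/z)‖
      + ‖Complex.log (1 - (cN1:ℂ)/z)‖) + N * (6 * (K / ‖z‖)) := by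
        have := norm_add_le (Complex.log (1 - (d0:ℂ)/z)) (Complex.log (1 - (cN1:ℂ)/z))
        linarith
    _ ≤ ((3 + 6 * N) * K) / ‖z‖ := by
        have heq : ((3 + 6 * N) * K) / ‖z‖
            = 3 * (K / ‖z‖) + N * (6 * (K / ‖z‖)) := by
          field_simp
        rw [heq]
        linarith



/-- `h` is holomorphic on the open upper half-plane `ℍ`, maps `ℍ` to `ℍ`, and satisfies
`h(z)² = (z−d₀)(z−c_{N+1})·∏ⱼ(cⱼ−z)(dⱼ−z)/(μⱼ−z)²` there. -/
def IsHerglotzSqrtJacobiInfty (N : ℕ) (d0 cN1 : ℝ) (c d μ : Fin N → ℝ)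
    (h : ℂ → ℂ) : Prop :=
  DifferentiableOn ℂ h {z : ℂ | 0 < z.im} ∧
  (∀ z ∈ {z : ℂ | 0 < z.im}, 0 < (h z).im) ∧
  (∀ z ∈ {z : ℂ | 0 < z.im},
    (h z) ^ 2 = (z - (d0 : ℂ)) * (z - (cN1 : ℂ)) *
      ∏ j, ((c j : ℂ) - z) * ((d j : ℂ) - z) / ((μ j : ℂ) - z) ^ 2)

theorem stmt8 (N : ℕ) (d0 cN1 : ℝ) (c d μ : Fin N → ℝ)
    (hd0cN1 : d0 < cN1) (hd0 : ∀ j, d0 < c j) (hcN1 : ∀ j, d j < cN1)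
    (hcd : ∀ j, c j < d j) (hsep : ∀ i j : Fin N, i < j → d i < c j)
    (hμ : ∀ j, μ j ∈ Set.Icc (c j) (d j)) :
    ∃ h : ℂ → ℂ, IsHerglotzSqrtJacobiInfty N d0 cN1 c d μ h ∧
      (∀ h' : ℂ → ℂ, IsHerglotzSqrtJacobiInfty N d0 cN1 c d μ h' →
        Set.EqOn h' h {z : ℂ | 0 < z.im}) ∧
      ∃ R > (0 : ℝ), ∃ M : ℝ, ∀ z : ℂ, 0 < z.im → R ≤ ‖z‖ →
        ‖h z - z‖ ≤ M := by
  have hπ := Real.pi_pos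
  set h : ℂ → ℂ := fun z => Complex.exp (Saux N d0 cN1 c d μ z / 2) with hdef
  -- the square identity
  have hsq : ∀ z ∈ {z : ℂ | 0 < z.im},
      (h z) ^ 2 = (z - (d0 : ℂ)) * (z - (cN1 : ℂ)) *
      ∏ j, ((c j : ℂ) - z) * ((d j : ℂ) - z) / ((μ j : ℂ) - z) ^ 2 := by
    intro z hz
    have : (h z) ^ 2 = Complex.exp (Saux N d0 cN1 c d μ z) := by
      rw [hdef]
      rw [show Complex.exp (Saux N d0 cN1 c d μ z / 2) ^ 2
          = Complex.exp (((2:ℕ):ℂ) * (Saux N d0 cN1 c d μ z / 2)) by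
        rw [Complex.exp_nat_mul]]
      congr 1
      push_cast
      ring
    rw [this, exp_Saux_eq N d0 cN1 c d μ hz]
  -- positivity of imaginary part
  have hpos : ∀ z ∈ {z : ℂ | 0 < z.im}, 0 < (h z).im := by
    intro z hz
    have hb := im_Saux_bounds N d0 cN1 c d μ hd0cN1 hd0 hcN1 hcd hsep hμ hz
    rw [hdef]
    simp only [Complex.exp_im, imDivTwo]
    apply mul_pos (Real.exp_pos _)
    apply Real.sin_pos_of_pos_of_lt_pi
    · linarith [hb.1]
    · linarith [hb.2]
  have hdiff : DifferentiableOn ℂ h {z : ℂ | 0 < z.im} := by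
    intro z hz
    exact (((diff_Saux N d0 cN1 c d μ hz).div_const 2).cexp).differentiableWithinAt
  refine ⟨h, ⟨hdiff, hpos, hsq⟩, ?_, ?_⟩
  · -- uniqueness
    rintro h' ⟨hdiff', hpos', hsq'⟩ z hz
    have heq : h' z ^ 2 = h z ^ 2 := by rw [hsq' z hz, hsq z hz]
    rcases (Commute.all (h' z) (h z)).sq_eq_sq_iff_eq_or_eq_neg.mp heq with he | he
    · exact he
    · exfalso
      have h1 := hpos' z hz
      have h2 := hpos z hz
      rw [he] at h1
      simp only [Complex.neg_im] at h1
      linarith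
  · -- asymptotics
    set K : ℝ := |d0| + |cN1| + 1 with hKdef
    have hK1 : 1 ≤ K := by
      have := abs_nonneg d0
      have := abs_nonneg cN1
      simp only [hKdef]; linarith
    set C : ℝ := (3 + 6 * N) * K with hCdef
    have hC : 0 < C := by
      have : (0:ℝ) ≤ N := Nat.cast_nonneg N
      simp only [hCdef]; nlinarith
    refine ⟨2 * K + C + 2, by linarith, C, ?_⟩
    intro z hz hR
    have hzne : z ≠ 0 := by
      intro hc
      rw [hc] at hz
      simp at hz
    have hza : 0 < ‖z‖ := by simpa [norm_pos_iff] using hzne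
    have habsK : ∀ a : ℝ, d0 ≤ a → a ≤ cN1 → |a| ≤ K := by
      intro a h1 h2
      rw [abs_le]
      constructor
      · have := neg_abs_le d0
        simp only [hKdef]
        linarith [abs_nonneg cN1]
      · have := le_abs_self cN1
        simp only [hKdef]
        linarith [abs_nonneg d0]
    have h2K : 2 * K ≤ ‖z‖ := by linarith [hC]
    have hfrac : ∀ a : ℝ, d0 ≤ a → a ≤ cN1 → ‖(a:ℂ)/z‖ ≤ 1/2 := by
      intro a h1 h2
      rw [norm_div, Complex.norm_real, Real.norm_eq_abs]
      calc |a| / ‖z‖ ≤ K / (2 * K) := by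
            apply div_le_div₀ (by linarith) (habsK a h1 h2) (by linarith) h2K
        _ = 1/2 := by
            rw [div_eq_iff (by linarith : (2:ℝ) * K ≠ 0)]
            ring
    have hdecomp := Saux_decomp N d0 cN1 c d μ hz hfrac hd0cN1 hd0 hcN1 hcd hμ
    have hTb := Taux_bound N d0 cN1 c d μ hzne habsK hfrac hd0cN1 hd0 hcN1 hcd hμ
    have hTC : ‖Taux N d0 cN1 c d μ z‖ ≤ C / ‖z‖ := by
      rw [hCdef]; exact hTb
    have hCz : C / ‖z‖ ≤ 1 := by
      rw [div_le_one hza]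
      linarith
    have hform : h z = z * Complex.exp (Taux N d0 cN1 c d μ z / 2) := by
      rw [hdef]
      show Complex.exp (Saux N d0 cN1 c d μ z / 2) = _
      rw [hdecomp, show (2 * Complex.log z + Taux N d0 cN1 c d μ z) / 2
          = Complex.log z + Taux N d0 cN1 c d μ z / 2 by ring,
        Complex.exp_add, Complex.exp_log hzne]
    have hT2 : ‖Taux N d0 cN1 c d μ z / 2‖
        = ‖Taux N d0 cN1 c d μ z‖ / 2 := by
      rw [norm_div]
      simp
    calc ‖h z - z‖
        = ‖z‖ * ‖Complex.exp (Taux N d0 cN1 c d μ z / 2) - 1‖ := by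
          rw [hform, show z * Complex.exp (Taux N d0 cN1 c d μ z / 2) - z
            = z * (Complex.exp (Taux N d0 cN1 c d μ z / 2) - 1) by ring, norm_mul]
      _ ≤ ‖z‖ * (2 * ‖Taux N d0 cN1 c d μ z / 2‖) := by
          apply mul_le_mul_of_nonneg_left _ hza.le
          apply Complex.norm_exp_sub_one_le
          rw [hT2]
          linarith
      _ = ‖z‖ * ‖Taux N d0 cN1 c d μ z‖ := by
          rw [hT2]; ring
      _ ≤ ‖z‖ * (C / ‖z‖) := by
          exact mul_le_mul_of_nonneg_left hTC hza.le
      _ = C := by field_simp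
end
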